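/- arXiv:2502.09149 — 10 statements merged into one kernel-verified Lean document; each statement's English description precedes it below -/
import Mathlib

section
/- Every vertex of the polytope of n×n doubly stochastic matrices is a permutation matrix. -/
def isDoublyStochastic {n : ℕ} (A : Matrix (Fin n) (Fin n) ℝ) : Prop :=
  (∀ i j, 0 ≤ A i j) ∧ (∀ i, ∑ j, A i j = 1) ∧ (∀ j, ∑ i, A i j = 1)

def isDSVertex {n : ℕ} (A : Matrix (Fin n) (Fin n) ℝ) : Prop :=
  isDoublyStochastic A ∧
  ∀ B C : Matrix (Fin n) (Fin n) ℝ, isDoublyStochastic B → isDoublyStochastic C →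
    ∀ t : ℝ, 0 < t → t < 1 → A = t • B + (1 - t) • C → B = A ∧ C = A

lemma isDS_iff_mem {n : ℕ} (A : Matrix (Fin n) (Fin n) ℝ) :
    isDoublyStochastic A ↔ A ∈ doublyStochastic ℝ (Fin n) := by
  rw [mem_doublyStochastic_iff_sum]; rfl

lemma sum_perm_mem {n : ℕ} (w : Equiv.Perm (Fin n) → ℝ) (hw : ∀ σ, 0 ≤ w σ)
    (hsum : ∑ σ, w σ = 1) :
    (∑ σ, w σ • σ.permMatrix ℝ) ∈ doublyStochastic ℝ (Fin n) := by
  have hset : (doublyStochastic ℝ (Fin n) : Set (Matrix (Fin n) (Fin n) ℝ)) =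
      convexHull ℝ {σ.permMatrix ℝ | σ : Equiv.Perm (Fin n)} :=
    doublyStochastic_eq_convexHull_permMatrix
  rw [← SetLike.mem_coe, hset]
  exact mem_convexHull_of_exists_fintype w (fun σ => Equiv.Perm.permMatrix ℝ σ) hw hsum
    (fun σ => ⟨σ, rfl⟩) rfl

theorem vertex_is_permutation_matrix {n : ℕ} (A : Matrix (Fin n) (Fin n) ℝ)
    (hA : isDSVertex A) :
    ∃ σ : Equiv.Perm (Fin n), A = Matrix.of fun i j => if σ i = j then (1 : ℝ) else 0 := by
  obtain ⟨hDS, hvert⟩ := hA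
  rw [isDS_iff_mem] at hDS
  obtain ⟨w, hw0, hw1, hw2⟩ := exists_eq_sum_perm_of_mem_doublyStochastic hDS
  have hperm : ∀ σ : Equiv.Perm (Fin n),
      σ.permMatrix ℝ = Matrix.of fun i j => if σ i = j then (1 : ℝ) else 0 := by
    intro σ; ext i j
    simp [Equiv.Perm.permMatrix, PEquiv.toMatrix_apply, Equiv.toPEquiv_apply, eq_comm]
  obtain ⟨σ, hσ⟩ : ∃ σ, 0 < w σ := by
    by_contra h
    push_neg at h
    have : ∀ σ, w σ = 0 := fun σ => le_antisymm (h σ) (hw0 σ)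
    simp [this] at hw1
  have ht : w σ + ∑ σ' ∈ Finset.univ.erase σ, w σ' = 1 := by
    rw [Finset.add_sum_erase _ w (Finset.mem_univ σ)]; exact hw1
  have hA' : w σ • σ.permMatrix ℝ +
      ∑ σ' ∈ Finset.univ.erase σ, w σ' • σ'.permMatrix ℝ = A := by
    rw [Finset.add_sum_erase _ (fun σ' => w σ' • σ'.permMatrix ℝ) (Finset.mem_univ σ)]
    exact hw2
  rcases lt_or_eq_of_le (show w σ ≤ 1 by
      rw [← hw1]; exact Finset.single_le_sum (fun σ _ => hw0 σ) (Finset.mem_univ σ)) with h1 | h1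
  · -- w σ < 1, use vertex property
    set t := w σ with htdef
    have hrest : ∑ σ' ∈ Finset.univ.erase σ, w σ' = 1 - t := by linarith
    set w' : Equiv.Perm (Fin n) → ℝ :=
      fun σ' => if σ' = σ then 0 else (1 - t)⁻¹ * w σ' with hw'
    set C : Matrix (Fin n) (Fin n) ℝ := ∑ σ', w' σ' • σ'.permMatrix ℝ with hC
    have hCmem : C ∈ doublyStochastic ℝ (Fin n) := by
      apply sum_perm_mem
      · intro σ'; rw [hw']; dsimp only; split
        · exact le_refl 0
        · exact mul_nonneg (inv_nonneg.2 (by linarith)) (hw0 _)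
      · rw [← Finset.sum_erase (Finset.univ) (show w' σ = 0 by simp [hw'])]
        rw [Finset.sum_congr rfl (fun σ' hσ' => show w' σ' = (1 - t)⁻¹ * w σ' by
          simp [hw', Finset.ne_of_mem_erase hσ'])]
        rw [← Finset.mul_sum, hrest, inv_mul_cancel₀ (by linarith)]
    have hsplit : A = t • σ.permMatrix ℝ + (1 - t) • C := by
      rw [hC, Finset.smul_sum]
      rw [Finset.sum_congr rfl (fun σ' _ => show (1 - t) • w' σ' • σ'.permMatrix ℝ =
        (if σ' = σ then 0 else w σ') • σ'.permMatrix ℝ by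
          rw [hw', smul_smul]; dsimp only; split
          · simp
          · rw [← mul_assoc, mul_inv_cancel₀ (by linarith), one_mul])]
      rw [← hA']
      congr 1
      rw [← Finset.sum_erase (Finset.univ)
        (f := fun σ' => (if σ' = σ then (0:ℝ) else w σ') • σ'.permMatrix ℝ) (a := σ)
        (by simp)]
      exact (Finset.sum_congr rfl fun σ' hσ' => by
        simp [Finset.ne_of_mem_erase hσ']).symm
    have := hvert (σ.permMatrix ℝ) C
      ((isDS_iff_mem _).2 permMatrix_mem_doublyStochastic)
      ((isDS_iff_mem _).2 hCmem) t hσ h1 hsplit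
    exact ⟨σ, by rw [← this.1, hperm]⟩
  · -- w σ = 1: all other weights zero
    have hs : ∑ σ' ∈ Finset.univ.erase σ, w σ' = 0 := by linarith
    refine ⟨σ, ?_⟩
    rw [← hperm σ, ← hA', Finset.sum_eq_zero (fun σ' hσ' => by
      rw [(Finset.sum_eq_zero_iff_of_nonneg (fun σ'' _ => hw0 σ'')).1 hs σ' hσ', zero_smul])]
    rw [h1, one_smul, add_zero]
end

section
/- A d-dimensional polystochastic matrix A of order n is a vertex of the Birkhoff polytope Ω_n^d if and only if there is no nonempty zero-sum set R contained in the support of A. -/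
def isPolystochastic (d n : ℕ) (A : (Fin d → Fin n) → ℝ) : Prop :=
  (∀ α, 0 ≤ A α) ∧
  ∀ (k : Fin d) (α : Fin d → Fin n), ∑ x : Fin n, A (Function.update α k x) = 1

def isVertex (d n : ℕ) (A : (Fin d → Fin n) → ℝ) : Prop :=
  isPolystochastic d n A ∧
  ∀ B C : (Fin d → Fin n) → ℝ, isPolystochastic d n B → isPolystochastic d n C →
    ∀ t : ℝ, 0 < t → t < 1 → (∀ α, A α = t * B α + (1 - t) * C α) → B = A ∧ C = A

def isMPerm (d n : ℕ) (A : (Fin d → Fin n) → ℝ) : Prop :=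
  isPolystochastic d n A ∧ ∀ α, A α = 0 ∨ A α = 1

def msupport {d n : ℕ} (A : (Fin d → Fin n) → ℝ) : Set (Fin d → Fin n) := {α | A α ≠ 0}

def isZeroSum (d n : ℕ) (B : (Fin d → Fin n) → ℝ) : Prop :=
  ∀ (k : Fin d) (α : Fin d → Fin n), ∑ x : Fin n, B (Function.update α k x) = 0

theorem vertex_iff_no_zero_sum_set {d n : ℕ} (A : (Fin d → Fin n) → ℝ)
    (hA : isPolystochastic d n A) :
    isVertex d n A ↔
      ¬ ∃ B : (Fin d → Fin n) → ℝ, isZeroSum d n B ∧ (msupport B).Nonempty ∧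
        msupport B ⊆ msupport A := by
  constructor
  · rintro ⟨-, hV⟩ ⟨B, hZ, ⟨α₀, hα₀⟩, hsub⟩
    have hα₀' : B α₀ ≠ 0 := hα₀
    set S : Finset (Fin d → Fin n) := Finset.univ.filter (fun α => B α ≠ 0) with hSdef
    have hS : S.Nonempty := ⟨α₀, by simp [hSdef, hα₀']⟩
    set ε : ℝ := S.inf' hS (fun α => A α / |B α|) with hεdef
    have hApos : ∀ α ∈ S, 0 < A α := by
      intro α hαS
      have hBα : B α ≠ 0 := by simpa [hSdef] using hαS
      have : A α ≠ 0 := hsub hBα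
      exact lt_of_le_of_ne (hA.1 α) (Ne.symm this)
    have hεpos : 0 < ε := by
      rw [hεdef, Finset.lt_inf'_iff]
      intro α hαS
      have hBα : B α ≠ 0 := by simpa [hSdef] using hαS
      exact div_pos (hApos α hαS) (abs_pos.mpr hBα)
    have hbound : ∀ α, ε * |B α| ≤ A α := by
      intro α
      by_cases hBα : B α = 0
      · simp [hBα]; exact hA.1 α
      · have hαS : α ∈ S := by simp [hSdef, hBα]
        have h1 : ε ≤ A α / |B α| := Finset.inf'_le _ hαS
        have h2 : 0 < |B α| := abs_pos.mpr hBα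
        calc ε * |B α| ≤ (A α / |B α|) * |B α| := by
              exact mul_le_mul_of_nonneg_right h1 h2.le
          _ = A α := div_mul_cancel₀ _ h2.ne'
    have hnonneg : ∀ (s : ℝ), |s| = 1 → isPolystochastic d n (fun α => A α + s * ε * B α) := by
      intro s hs
      constructor
      · intro α
        have h1 : s * ε * B α ≥ -(ε * |B α|) := by
          have : |s * ε * B α| = ε * |B α| := by
            rw [abs_mul, abs_mul, hs, abs_of_pos hεpos]; ring
          linarith [neg_abs_le (s * ε * B α), this.ge, this.le]
        have := hbound α
        show 0 ≤ A α + s * ε * B α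
        linarith
      · intro k α
        rw [Finset.sum_add_distrib]
        have h1 := hA.2 k α
        have h2 := hZ k α
        have : ∑ x : Fin n, s * ε * B (Function.update α k x)
            = s * ε * ∑ x : Fin n, B (Function.update α k x) := by
          rw [Finset.mul_sum]
        rw [this, h2, h1]; ring
    have hB' := hnonneg 1 (by norm_num)
    have hC' := hnonneg (-1) (by norm_num)
    have hconv : ∀ α, A α = (1/2 : ℝ) * (A α + 1 * ε * B α)
        + (1 - 1/2) * (A α + (-1) * ε * B α) := by intro α; ring
    obtain ⟨hBA, -⟩ := hV _ _ hB' hC' (1/2) (by norm_num) (by norm_num) hconv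
    have := congrFun hBA α₀
    have : ε * B α₀ = 0 := by linarith [this]
    rcases mul_eq_zero.mp this with h | h
    · exact absurd h hεpos.ne'
    · exact hα₀' h
  · intro hno
    refine ⟨hA, ?_⟩
    intro B C hB hC t ht0 ht1 hconv
    have hBA : B = A := by
      by_contra hne
      have hDne : ∃ α, B α - A α ≠ 0 := by
        by_contra h
        push_neg at h
        exact hne (funext fun α => by linarith [h α])
      obtain ⟨α₁, hα₁⟩ := hDne
      apply hno
      refine ⟨fun α => B α - A α, ?_, ⟨α₁, hα₁⟩, ?_⟩
      · intro k α
        rw [Finset.sum_sub_distrib, hB.2 k α, hA.2 k α]; ring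
      · intro α hα
        simp only [msupport, Set.mem_setOf_eq] at hα ⊢
        intro hAα
        apply hα
        have h1 := hconv α
        have h2 := hB.1 α
        have h3 := hC.1 α
        have h4 : 0 ≤ t * B α := mul_nonneg ht0.le h2
        have h5 : 0 ≤ (1 - t) * C α := mul_nonneg (by linarith) h3
        have h6 : t * B α = 0 := by linarith
        have : B α = 0 := by
          rcases mul_eq_zero.mp h6 with h | h
          · exact absurd h ht0.ne'
          · exact h
        rw [this, hAα]; ring
    have hCA : C = A := by
      funext α
      have h1 := hconv α
      rw [congrFun hBA α] at h1
      have h2 : (1 - t) * (C α - A α) = 0 := by linarith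
      rcases mul_eq_zero.mp h2 with h | h
      · exact absurd h (by linarith)
      · linarith
    exact ⟨hBA, hCA⟩
end

section
/- Let T be a d-dimensional (0,1)-matrix of order n with support size N, and let L be the (d·n^{d-1})×N incidence matrix between lines of T and elements of the support. Then the support of T is the support of a vertex of Ω_n^d if and only if rank(L) = N and the equation Lx = 1 (all-ones vector) has a solution x with all coordinates strictly positive. -/
lemma key_sum {d n : ℕ} {T : (Fin d → Fin n) → ℝ}
    (L : Matrix (Fin d × (Fin d → Fin n)) {α : Fin d → Fin n // T α ≠ 0} ℝ)
    (hL : ∀ (k : Fin d) (f : Fin d → Fin n) (α : {α : Fin d → Fin n // T α ≠ 0}),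
      L (k, f) α = if ∀ i, i ≠ k → (α : Fin d → Fin n) i = f i then 1 else 0)
    (A : (Fin d → Fin n) → ℝ) (hA0 : ∀ α, T α = 0 → A α = 0)
    (k : Fin d) (f : Fin d → Fin n) :
    L.mulVec (fun j => A j.1) (k, f) = ∑ v : Fin n, A (Function.update f k v) := by
  classical
  have h1 : L.mulVec (fun j => A j.1) (k, f)
      = ∑ j : {α : Fin d → Fin n // T α ≠ 0},
          (if ∀ i, i ≠ k → (j : Fin d → Fin n) i = f i then A j.1 else 0) := by
    simp only [Matrix.mulVec, dotProduct, hL]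
    exact Finset.sum_congr rfl fun j _ => by split <;> simp
  rw [h1]
  have h2 : ∑ j : {α : Fin d → Fin n // T α ≠ 0},
        (if ∀ i, i ≠ k → (j : Fin d → Fin n) i = f i then A j.1 else 0)
      = ∑ α : Fin d → Fin n, (if ∀ i, i ≠ k → α i = f i then A α else 0) := by
    rw [← Finset.sum_subtype (Finset.univ.filter fun α => T α ≠ 0) (by simp)
      (fun α => if ∀ i, i ≠ k → α i = f i then A α else 0)]
    apply Finset.sum_subset (Finset.subset_univ _)
    intro α _ hα
    simp only [Finset.mem_filter, Finset.mem_univ, true_and, not_not] at hα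
    split <;> simp [hA0 α hα]
  rw [h2]
  rw [← Finset.sum_filter]
  apply Finset.sum_nbij' (fun α => α k) (fun v => Function.update f k v)
  · intro α _; exact Finset.mem_univ _
  · intro v _
    simp only [Finset.mem_filter, Finset.mem_univ, true_and]
    intro i hi; exact Function.update_of_ne hi _ _
  · intro α hα
    simp only [Finset.mem_filter, Finset.mem_univ, true_and] at hα
    funext i
    by_cases hik : i = k
    · subst hik; simp
    · rw [Function.update_of_ne hik, hα i hik]
  · intro v _; simp
  · intro α hα
    simp only [Finset.mem_filter, Finset.mem_univ, true_and] at hα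
    congr 1
    funext i
    by_cases hik : i = k
    · subst hik; simp
    · rw [Function.update_of_ne hik, hα i hik]

lemma rank_eq_card_iff {m s : Type*} [Fintype m] [Fintype s] [DecidableEq s]
    (M : Matrix m s ℝ) :
    M.rank = Fintype.card s ↔ ∀ y, M.mulVec y = 0 → y = 0 := by
  have hdim : Module.finrank ℝ (s → ℝ) = Fintype.card s :=
    Module.finrank_fintype_fun_eq_card ℝ
  have hadd := LinearMap.finrank_range_add_finrank_ker M.mulVecLin
  rw [hdim] at hadd
  rw [Matrix.rank]
  constructor
  · intro h y hy
    have hker : LinearMap.ker M.mulVecLin = ⊥ := by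
      have h0 : Module.finrank ℝ (LinearMap.ker M.mulVecLin) = 0 := by omega
      exact Submodule.finrank_eq_zero.mp h0
    have : M.mulVecLin y = 0 := by simpa [Matrix.mulVecLin_apply] using hy
    exact (LinearMap.ker_eq_bot.mp hker).eq_iff.mp (by simpa using this)
  · intro h
    have hker : LinearMap.ker M.mulVecLin = ⊥ :=
      LinearMap.ker_eq_bot'.mpr fun y hy => h y (by simpa [Matrix.mulVecLin_apply] using hy)
    rw [hker, finrank_bot] at hadd
    omega

theorem vertex_support_iff_incidence {d n : ℕ} (T : (Fin d → Fin n) → ℝ)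
    (hT : ∀ α, T α = 0 ∨ T α = 1)
    (hN : Fintype.card {α : Fin d → Fin n // T α ≠ 0} ≤ n ^ d - (n - 1) ^ d)
    (L : Matrix (Fin d × (Fin d → Fin n)) {α : Fin d → Fin n // T α ≠ 0} ℝ)
    (hL : ∀ (k : Fin d) (f : Fin d → Fin n) (α : {α : Fin d → Fin n // T α ≠ 0}),
      L (k, f) α = if ∀ i, i ≠ k → (α : Fin d → Fin n) i = f i then 1 else 0) :
    (∃ A : (Fin d → Fin n) → ℝ, isVertex d n A ∧ msupport A = msupport T) ↔
      (L.rank = Fintype.card {α : Fin d → Fin n // T α ≠ 0} ∧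
        ∃ x : {α : Fin d → Fin n // T α ≠ 0} → ℝ,
          (∀ j, 0 < x j) ∧ L.mulVec x = fun _ => 1) := by
  classical
  constructor
  · rintro ⟨A, ⟨hAps, hAv⟩, hsupp⟩
    have hsupp' : ∀ α, A α = 0 ↔ T α = 0 := by
      intro α
      have := Set.ext_iff.mp hsupp α
      simp only [msupport, Set.mem_setOf_eq] at this
      exact not_iff_not.mp this
    have hA0 : ∀ α, T α = 0 → A α = 0 := fun α h => (hsupp' α).mpr h
    set x : {α : Fin d → Fin n // T α ≠ 0} → ℝ := fun j => A j.1 with hxdef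
    have hx1 : L.mulVec x = fun _ => 1 := by
      funext p
      obtain ⟨k, f⟩ := p
      rw [show L.mulVec x (k, f) = L.mulVec (fun j => A j.1) (k, f) from rfl,
        key_sum L hL A hA0 k f]
      exact hAps.2 k f
    have hxpos : ∀ j, 0 < x j := by
      intro j
      have hne : A j.1 ≠ 0 := fun h => j.2 ((hsupp' j.1).mp h)
      exact lt_of_le_of_ne (hAps.1 j.1) (Ne.symm hne)
    refine ⟨?_, x, hxpos, hx1⟩
    rw [rank_eq_card_iff]
    intro y hy
    by_contra hy0
    obtain ⟨j0, hj0⟩ := Function.ne_iff.mp hy0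
    have hj0' : y j0 ≠ 0 := hj0
    have hne : (Finset.univ : Finset {α : Fin d → Fin n // T α ≠ 0}).Nonempty :=
      ⟨j0, Finset.mem_univ _⟩
    set m := Finset.univ.inf' hne x with hmdef
    have hm : 0 < m := (Finset.lt_inf'_iff hne).mpr fun j _ => hxpos j
    set Mx := Finset.univ.sup' hne (fun j => |y j|) with hMdef
    have hM : 0 < Mx :=
      lt_of_lt_of_le (abs_pos.mpr hj0') (Finset.le_sup' (fun j => |y j|) (Finset.mem_univ j0))
    set ε := m / Mx with hεdef
    have hε : 0 < ε := div_pos hm hM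
    have hbound : ∀ j, ε * |y j| ≤ x j := by
      intro j
      calc ε * |y j| ≤ ε * Mx :=
            mul_le_mul_of_nonneg_left (Finset.le_sup' (fun j => |y j|) (Finset.mem_univ j)) hε.le
        _ = m := div_mul_cancel₀ m hM.ne'
        _ ≤ x j := Finset.inf'_le x (Finset.mem_univ j)
    set Y : (Fin d → Fin n) → ℝ := fun α => if h : T α ≠ 0 then y ⟨α, h⟩ else 0 with hYdef
    have hY0 : ∀ α, T α = 0 → Y α = 0 := fun α h => dif_neg (by simp [h])
    have hYx : (fun j : {α : Fin d → Fin n // T α ≠ 0} => Y j.1) = y :=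
      funext fun j => dif_pos j.2
    have hYbound : ∀ α, ε * |Y α| ≤ A α := by
      intro α
      by_cases h : T α = 0
      · rw [hY0 α h, hA0 α h]; simp
      · have hYα : Y α = y ⟨α, h⟩ := dif_pos h
        rw [hYα]
        exact hbound ⟨α, h⟩
    have hYsum : ∀ (k : Fin d) (f : Fin d → Fin n),
        ∑ v : Fin n, Y (Function.update f k v) = 0 := by
      intro k f
      rw [← key_sum L hL Y hY0 k f, hYx, hy]
      rfl
    have hBps : isPolystochastic d n (fun α => A α + ε * Y α) := by
      constructor
      · intro α
        have h1 := hYbound α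
        have h2 : -(ε * |Y α|) ≤ ε * Y α := by
          have := neg_abs_le (Y α)
          nlinarith
        show 0 ≤ A α + ε * Y α
        linarith
      · intro k f
        rw [Finset.sum_add_distrib, hAps.2 k f, ← Finset.mul_sum, hYsum k f]
        ring
    have hCps : isPolystochastic d n (fun α => A α - ε * Y α) := by
      constructor
      · intro α
        have h1 := hYbound α
        have h2 : ε * Y α ≤ ε * |Y α| := by
          have := le_abs_self (Y α)
          nlinarith
        show 0 ≤ A α - ε * Y α
        linarith
      · intro k f
        rw [Finset.sum_sub_distrib, hAps.2 k f, ← Finset.mul_sum, hYsum k f]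
        ring
    have hAeq : ∀ α, A α = (1/2 : ℝ) * (A α + ε * Y α) + (1 - 1/2) * (A α - ε * Y α) := by
      intro α; ring
    obtain ⟨hB, _⟩ := hAv _ _ hBps hCps (1/2) (by norm_num) (by norm_num) hAeq
    have := congrFun hB j0.1
    have hyj : Y j0.1 = y j0 := dif_pos j0.2
    have : ε * y j0 = 0 := by rw [← hyj]; linarith
    rcases mul_eq_zero.mp this with h | h
    · exact hε.ne' h
    · exact hj0' h
  · rintro ⟨hrank, x, hxpos, hx1⟩
    set A : (Fin d → Fin n) → ℝ := fun α => if h : T α ≠ 0 then x ⟨α, h⟩ else 0 with hAdef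
    have hA0 : ∀ α, T α = 0 → A α = 0 := fun α h => dif_neg (by simp [h])
    have hAx : (fun j : {α : Fin d → Fin n // T α ≠ 0} => A j.1) = x :=
      funext fun j => dif_pos j.2
    have hAps : isPolystochastic d n A := by
      constructor
      · intro α
        by_cases h : T α ≠ 0
        · rw [show A α = x ⟨α, h⟩ from dif_pos h]; exact (hxpos _).le
        · rw [hA0 α (not_not.mp h)]
      · intro k f
        rw [← key_sum L hL A hA0 k f, hAx, hx1]
    have hinj := (rank_eq_card_iff L).mp hrank
    refine ⟨A, ⟨hAps, ?_⟩, ?_⟩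
    · intro B C hB hC t ht0 ht1 hABC
      have ht1' : 0 < 1 - t := by linarith
      have hBC0 : ∀ α, T α = 0 → B α = 0 ∧ C α = 0 := by
        intro α h
        have hA : A α = 0 := hA0 α h
        have heq := hABC α
        rw [hA] at heq
        have hb := hB.1 α
        have hc := hC.1 α
        constructor <;> nlinarith
      set b : {α : Fin d → Fin n // T α ≠ 0} → ℝ := fun j => B j.1 with hbdef
      set c : {α : Fin d → Fin n // T α ≠ 0} → ℝ := fun j => C j.1 with hcdef
      have hLb : L.mulVec b = fun _ => 1 := by
        funext p; obtain ⟨k, f⟩ := p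
        rw [show L.mulVec b (k, f) = L.mulVec (fun j => B j.1) (k, f) from rfl,
          key_sum L hL B (fun α h => (hBC0 α h).1) k f]
        exact hB.2 k f
      have hLc : L.mulVec c = fun _ => 1 := by
        funext p; obtain ⟨k, f⟩ := p
        rw [show L.mulVec c (k, f) = L.mulVec (fun j => C j.1) (k, f) from rfl,
          key_sum L hL C (fun α h => (hBC0 α h).2) k f]
        exact hC.2 k f
      have hzero : L.mulVec (b - c) = 0 := by
        rw [Matrix.mulVec_sub, hLb, hLc]
        funext p; simp
      have hbc : b = c := sub_eq_zero.mp (hinj _ hzero)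
      have hBCeq : B = C := by
        funext α
        by_cases h : T α = 0
        · rw [(hBC0 α h).1, (hBC0 α h).2]
        · exact congrFun hbc ⟨α, h⟩
      have hBA : B = A := by
        funext α
        have := hABC α
        rw [← hBCeq] at this
        rw [this]; ring
      exact ⟨hBA, hBCeq ▸ hBA⟩
    · ext α
      simp only [msupport, Set.mem_setOf_eq]
      constructor
      · intro hA h
        exact hA (hA0 α h)
      · intro h
        rw [show A α = x ⟨α, h⟩ from dif_pos h]
        exact (hxpos ⟨α, h⟩).ne'
end

section
/- If A is a vertex of the polytope Ω_n^d of d-dimensional polystochastic matrices of order n, then the size of the support of A is at most n^d − (n−1)^d. -/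
open Function Module

theorem Submodule.exists_ne_zero_forall_eq_zero_of_ncard_lt_finrank {K ι : Type*} [Field K]
    [Finite ι] (W : Submodule K (ι → K)) (Z : Set ι) (hZ : Z.ncard < finrank K W) :
    ∃ v ∈ W, v ≠ 0 ∧ ∀ i ∈ Z, v i = 0 := by
  have : Fintype Z := Fintype.ofFinite Z
  let restrict : W →ₗ[K] Z → K := LinearMap.funLeft K K ((↑) : Z → ι) ∘ₗ W.subtype
  have hker : LinearMap.ker restrict ≠ ⊥ := restrict.ker_ne_bot_of_finrank_lt <| by
    rwa [finrank_fintype_fun_eq_card, Fintype.card_eq_nat_card, Nat.card_coe_set_eq]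
  obtain ⟨⟨v, hvW⟩, hv, hv0⟩ := (Submodule.ne_bot_iff _).1 hker
  refine ⟨v, hvW, fun h => hv0 (by simp [h]), fun i hi => ?_⟩
  simpa [restrict] using congrFun (LinearMap.mem_ker.1 hv) ⟨i, hi⟩

def lineSumZero (d n : ℕ) : Submodule ℝ ((Fin d → Fin n) → ℝ) where
  carrier := {V | ∀ (k : Fin d) (α : Fin d → Fin n), ∑ x, V (update α k x) = 0}
  add_mem' hV hW k α := by simp [Finset.sum_add_distrib, hV k α, hW k α]
  zero_mem' := by simp
  smul_mem' c V hV k α := by simp [← Finset.mul_sum, hV k α]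

theorem isPolystochastic_add {d n : ℕ} {A V : (Fin d → Fin n) → ℝ} (hA : isPolystochastic d n A)
    (hV : V ∈ lineSumZero d n) (hnonneg : ∀ α, 0 ≤ A α + V α) :
    isPolystochastic d n (A + V) :=
  ⟨hnonneg, fun k α => by simp [Finset.sum_add_distrib, hA.2 k α, hV k α]⟩

theorem exists_pos_forall_mul_abs_le {ι : Type*} [Finite ι] {a v : ι → ℝ} (ha : ∀ i, 0 ≤ a i)
    (hv : ∀ i, a i = 0 → v i = 0) : ∃ ε > 0, ∀ i, ε * |v i| ≤ a i := by
  have hsmall : ∀ᶠ ε in nhdsWithin (0 : ℝ) (Set.Ioi 0), ∀ i, ε * |v i| ≤ a i := by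
    refine Filter.eventually_all.2 fun i => ?_
    rcases (ha i).eq_or_lt with hai | hai
    · simp [← hai, hv i hai.symm]
    · have hlim : Filter.Tendsto (fun ε : ℝ => ε * |v i|) (nhds 0) (nhds 0) :=
        (continuous_mul_const |v i|).tendsto' 0 0 (zero_mul _)
      exact nhdsWithin_le_nhds ((hlim.eventually (gt_mem_nhds hai)).mono fun _ => le_of_lt)
  obtain ⟨ε, hε, hεpos⟩ := (hsmall.and self_mem_nhdsWithin).exists
  exact ⟨ε, hεpos, hε⟩

theorem isVertex.eq_zero_of_mem_lineSumZero {d n : ℕ} {A V : (Fin d → Fin n) → ℝ}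
    (hA : isVertex d n A) (hV : V ∈ lineSumZero d n) (hVA : ∀ α, A α = 0 → V α = 0) :
    V = 0 := by
  obtain ⟨ε, hε, hεV⟩ := exists_pos_forall_mul_abs_le hA.1.1 hVA
  have hplus := isPolystochastic_add hA.1 ((lineSumZero d n).smul_mem ε hV) fun α => by
    have := mul_le_mul_of_nonneg_left (neg_abs_le (V α)) hε.le
    simp only [Pi.smul_apply, smul_eq_mul]
    linarith [hεV α]
  have hminus := isPolystochastic_add hA.1 ((lineSumZero d n).smul_mem (-ε) hV) fun α => by
    have := mul_le_mul_of_nonneg_left (le_abs_self (V α)) hε.le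
    simp only [Pi.smul_apply, smul_eq_mul]
    linarith [hεV α]
  have hmid := (hA.2 _ _ hplus hminus (1 / 2) (by norm_num) (by norm_num)
    fun α => by simp only [Pi.add_apply, Pi.smul_apply, smul_eq_mul]; ring).1
  have hεV0 : ε • V = 0 := by simpa using hmid
  exact (smul_eq_zero.1 hεV0).resolve_left hε.ne'

noncomputable def diffLast {m : ℕ} (b : Fin m) : Fin (m + 1) → ℝ :=
  Pi.single b.castSucc 1 - Pi.single (Fin.last m) 1

noncomputable def prodDiffLast {d m : ℕ} (β : Fin d → Fin m) (α : Fin d → Fin (m + 1)) : ℝ :=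
  ∏ k, diffLast (β k) (α k)

theorem sum_diffLast {m : ℕ} (b : Fin m) : ∑ x, diffLast b x = 0 := by
  simp [diffLast, Finset.sum_sub_distrib]

theorem diffLast_castSucc {m : ℕ} (b c : Fin m) :
    diffLast b c.castSucc = if c = b then 1 else 0 := by
  simp [diffLast, Pi.single_apply, (Fin.castSucc_lt_last c).ne]

theorem prodDiffLast_mem_lineSumZero {d m : ℕ} (β : Fin d → Fin m) :
    prodDiffLast β ∈ lineSumZero d (m + 1) := by
  intro k α
  have hfactor : ∀ x, prodDiffLast β (update α k x)
      = diffLast (β k) x * ∏ j ∈ Finset.univ.erase k, diffLast (β j) (α j) := fun x => by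
    rw [prodDiffLast, ← Finset.mul_prod_erase _ _ (Finset.mem_univ k), update_self]
    exact congrArg _ (Finset.prod_congr rfl fun j hj => by
      rw [update_of_ne (Finset.ne_of_mem_erase hj)])
  simp_rw [hfactor, ← Finset.sum_mul, sum_diffLast, zero_mul]

theorem prodDiffLast_castSucc {d m : ℕ} (β γ : Fin d → Fin m) :
    prodDiffLast β (fun k => (γ k).castSucc) = if γ = β then 1 else 0 := by
  simp_rw [prodDiffLast, diffLast_castSucc, Finset.prod_ite_zero, Finset.prod_const_one,
    funext_iff, Finset.mem_univ, true_imp_iff]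

theorem linearIndependent_prodDiffLast (d m : ℕ) :
    LinearIndependent ℝ (prodDiffLast : (Fin d → Fin m) → (Fin d → Fin (m + 1)) → ℝ) := by
  refine Fintype.linearIndependent_iff.2 fun c hc γ => ?_
  simpa [prodDiffLast_castSucc] using congrFun hc fun k => (γ k).castSucc

theorem pow_le_finrank_lineSumZero (d m : ℕ) : m ^ d ≤ finrank ℝ (lineSumZero d (m + 1)) := by
  have hli : LinearIndependent ℝ fun β : Fin d → Fin m =>
      (⟨prodDiffLast β, prodDiffLast_mem_lineSumZero β⟩ : lineSumZero d (m + 1)) :=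
    LinearIndependent.of_comp (lineSumZero d (m + 1)).subtype (linearIndependent_prodDiffLast d m)
  simpa using hli.fintype_card_le_finrank

theorem isVertex.pow_le_ncard_zeros {d m : ℕ} {A : (Fin d → Fin (m + 1)) → ℝ}
    (hA : isVertex d (m + 1) A) : m ^ d ≤ {α | A α = 0}.ncard := by
  by_contra! hlt
  obtain ⟨V, hV, hV0, hVA⟩ :=
    (lineSumZero d (m + 1)).exists_ne_zero_forall_eq_zero_of_ncard_lt_finrank {α | A α = 0}
      (hlt.trans_le (pow_le_finrank_lineSumZero d m))
  exact hV0 (hA.eq_zero_of_mem_lineSumZero hV hVA)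

theorem vertex_support_size_le {d n : ℕ} (A : (Fin d → Fin n) → ℝ)
    (hA : isVertex d n A) :
    (msupport A).ncard ≤ n ^ d - (n - 1) ^ d := by
  obtain _ | m := n
  · -- every line of `[0]^d` is empty, so every matrix has zero line sums
    have hA0 : A = 0 := hA.eq_zero_of_mem_lineSumZero (fun _ _ => by simp) fun _ h => h
    simp [msupport, hA0]
  · have hsupp : msupport A = {α | A α = 0}ᶜ := rfl
    rw [hsupp, Set.ncard_compl, Nat.card_eq_fintype_card, Fintype.card_fun, Fintype.card_fin,
      Fintype.card_fin, Nat.add_sub_cancel]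
    exact Nat.sub_le_sub_left hA.pow_le_ncard_zeros _
end

section
/- If A is a d₁-dimensional permutation of order n and B is a vertex of Ω_n^{d₂}, then the dot product A · B is a vertex of Ω_n^{d₁+d₂−2}, with support size N(A·B) = n^{d₁−2} · N(B). -/
/-- The dot product of a `(e₁+1)`-dimensional and a `(e₂+1)`-dimensional matrix of order `n`,
a `(e₁+e₂)`-dimensional matrix of order `n`. -/
def dot {e₁ e₂ n : ℕ} (A : (Fin (e₁ + 1) → Fin n) → ℝ) (B : (Fin (e₂ + 1) → Fin n) → ℝ) :
    (Fin (e₁ + e₂) → Fin n) → ℝ := fun γ =>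
  ∑ x : Fin n,
    A (Fin.snoc (fun j => γ (Fin.castAdd e₂ j)) x) *
    B (Fin.cons x (fun j => γ (Fin.natAdd e₁ j)))

open Function Finset

namespace Fin

theorem natAdd_ne_castAdd {m k : ℕ} (i : Fin k) (j : Fin m) : natAdd m i ≠ castAdd k j := by
  rw [Ne, Fin.ext_iff, val_natAdd, val_castAdd]
  omega

theorem append_update_left {α : Type*} {m k : ℕ} (u : Fin m → α) (v : Fin k → α) (i : Fin m)
    (x : α) : append (update u i x) v = update (append u v) (castAdd k i) x := by
  ext j
  refine addCases (fun j => ?_) (fun j => ?_) j <;>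
    simp [update_apply, natAdd_ne_castAdd]

theorem append_update_right {α : Type*} {m k : ℕ} (u : Fin m → α) (v : Fin k → α) (i : Fin k)
    (x : α) : append u (update v i x) = update (append u v) (natAdd m i) x := by
  ext j
  refine addCases (fun j => ?_) (fun j => ?_) j <;>
    simp [update_apply, (natAdd_ne_castAdd _ _).symm]

end Fin

theorem eq_of_sum_eq_one {ι : Type*} [Fintype ι] {g : ι → ℝ} (h0 : ∀ x, 0 ≤ g x)
    (h1 : ∑ x, g x = 1) {x y : ι} (hx : g x = 1) (hy : g y = 1) : x = y := by
  classical
  by_contra hne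
  have : g x + g y ≤ ∑ z, g z := by
    rw [← sum_pair hne]
    exact sum_le_sum_of_subset_of_nonneg (subset_univ _) fun z _ _ => h0 z
  linarith

theorem card_filter_eq_of_bijective_cons {X Y : Type*} [Fintype X] [DecidableEq Y] {m : ℕ}
    (g : (Fin (m + 1) → X) → Y) (hg : ∀ b, Bijective fun x => g (Fin.cons x b)) (y : Y) :
    #{β | g β = y} = Fintype.card X ^ m := by
  let e b := Equiv.ofBijective _ (hg b)
  have fiber : {β // g β = y} ≃ (Fin m → X) :=
    { toFun := fun β => Fin.tail β.1
      invFun := fun b => ⟨Fin.cons ((e b).symm y) b, (e b).apply_symm_apply y⟩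
      left_inv := fun β => by
        have : (e (Fin.tail β.1)).symm y = β.1 0 := by
          rw [Equiv.symm_apply_eq]
          simp [e, ← β.2]
        ext1
        simp [this]
      right_inv := fun b => Fin.tail_cons _ _ }
  rw [← Fintype.card_subtype, Fintype.card_congr fiber, Fintype.card_fun, Fintype.card_fin]

theorem ncard_preimage_of_card_filter_eq {X Y : Type*} [Fintype X] [Fintype Y] [DecidableEq Y]
    (Φ : X → Y) {k : ℕ} (hΦ : ∀ y, #{x | Φ x = y} = k) (S : Set Y) :
    (Φ ⁻¹' S).ncard = k * S.ncard := by
  classical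
  rw [Set.ncard_eq_toFinset_card', Set.ncard_eq_toFinset_card',
    card_eq_sum_card_fiberwise (f := Φ) (t := S.toFinset) (by intro x; simp),
    sum_congr rfl fun y hy => ?_, sum_const, smul_eq_mul, mul_comm]
  rw [← hΦ y]
  congr 1
  ext x
  simp only [Set.mem_toFinset, Set.mem_preimage, mem_filter, mem_univ, true_and] at hy ⊢
  exact ⟨And.right, fun hx => ⟨hx ▸ hy, hx⟩⟩

def MapsLinesToLines {d d' n : ℕ} (ψ : (Fin d → Fin n) → Fin d' → Fin n) : Prop :=
  ∀ (k : Fin d) (α : Fin d → Fin n), ∃ (k' : Fin d') (γ : Fin d' → Fin n) (e : Fin n ≃ Fin n),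
    ∀ x, ψ (update α k x) = update γ k' (e x)

theorem isPolystochastic.comp {d d' n : ℕ} {P : (Fin d' → Fin n) → ℝ}
    (hP : isPolystochastic d' n P) {ψ : (Fin d → Fin n) → Fin d' → Fin n}
    (hψ : MapsLinesToLines ψ) : isPolystochastic d n (P ∘ ψ) := by
  refine ⟨fun α => hP.1 (ψ α), fun k α => ?_⟩
  obtain ⟨k', γ, e, hline⟩ := hψ k α
  simp only [comp_apply, hline]
  rw [e.sum_comp fun y => P (update γ k' y)]
  exact hP.2 k' γ

theorem isVertex_of_cover {d d' n : ℕ} {B : (Fin d → Fin n) → ℝ} (hB : isVertex d n B)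
    {M : (Fin d' → Fin n) → ℝ} (hM : isPolystochastic d' n M)
    (hcover : ∀ γ, ∃ ψ : (Fin d → Fin n) → Fin d' → Fin n,
      MapsLinesToLines ψ ∧ M ∘ ψ = B ∧ γ ∈ Set.range ψ) :
    isVertex d' n M := by
  refine ⟨hM, fun C D hC hD t ht0 ht1 hsplit => ?_⟩
  suffices ∀ γ, C γ = M γ ∧ D γ = M γ from
    ⟨funext fun γ => (this γ).1, funext fun γ => (this γ).2⟩
  intro γ
  obtain ⟨ψ, hψ, hMψ, α, rfl⟩ := hcover γ
  obtain ⟨hCψ, hDψ⟩ := hB.2 (C ∘ ψ) (D ∘ ψ) (hC.comp hψ) (hD.comp hψ) t ht0 ht1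
    fun α => by rw [← hMψ]; exact hsplit (ψ α)
  exact ⟨congrFun (hCψ.trans hMψ.symm) α, congrFun (hDψ.trans hMψ.symm) α⟩

namespace isMPerm

variable {f n : ℕ} {A : (Fin (f + 1 + 1) → Fin n) → ℝ}

theorem sum_snoc (hA : isMPerm (f + 1 + 1) n A) (β : Fin (f + 1) → Fin n) :
    ∑ x, A (Fin.snoc β x) = 1 := by
  simpa [Fin.update_snoc_last] using hA.1.2 (Fin.last _) (Fin.snoc β (β 0))

theorem existsUnique_snoc_eq_one (hA : isMPerm (f + 1 + 1) n A) (β : Fin (f + 1) → Fin n) :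
    ∃! x, A (Fin.snoc β x) = 1 := by
  obtain ⟨x, hx⟩ : ∃ x, A (Fin.snoc β x) = 1 := by
    by_contra! hnone
    have := hA.sum_snoc β
    simp [fun x => (hA.2 (Fin.snoc β x)).resolve_right (hnone x)] at this
  exact ⟨x, hx, fun y hy => eq_of_sum_eq_one (fun _ => hA.1.1 _) (hA.sum_snoc β) hy hx⟩

/-- The `(f + 1)`-ary quasigroup whose graph is the permutation `A`. -/
noncomputable def toFun (hA : isMPerm (f + 1 + 1) n A) (β : Fin (f + 1) → Fin n) : Fin n :=
  (hA.existsUnique_snoc_eq_one β).exists.choose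

variable (hA : isMPerm (f + 1 + 1) n A)

theorem apply_snoc (β : Fin (f + 1) → Fin n) (x : Fin n) :
    A (Fin.snoc β x) = if hA.toFun β = x then 1 else 0 := by
  have hσ := (hA.existsUnique_snoc_eq_one β).exists.choose_spec
  split_ifs with h
  · rw [← h]; exact hσ
  · exact (hA.2 _).resolve_right fun hx => h ((hA.existsUnique_snoc_eq_one β).unique hσ hx)

theorem bijective_toFun_update (k : Fin (f + 1)) (β : Fin (f + 1) → Fin n) :
    Bijective fun x => hA.toFun (update β k x) := by
  refine Finite.injective_iff_bijective.mp fun x y hxy => ?_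
  set z := hA.toFun (update β k x)
  have h1 : A (Fin.snoc (update β k x) z) = 1 := by rw [hA.apply_snoc, if_pos rfl]
  have h2 : A (Fin.snoc (update β k y) z) = 1 := by rw [hA.apply_snoc, if_pos hxy.symm]
  rw [Fin.snoc_update] at h1 h2
  exact eq_of_sum_eq_one (fun _ => hA.1.1 _) (hA.1.2 k.castSucc _) h1 h2

noncomputable def updateEquiv (k : Fin (f + 1)) (β : Fin (f + 1) → Fin n) : Fin n ≃ Fin n :=
  Equiv.ofBijective _ (hA.bijective_toFun_update k β)

@[simp]
theorem updateEquiv_apply (k : Fin (f + 1)) (β : Fin (f + 1) → Fin n) (x : Fin n) :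
    hA.updateEquiv k β x = hA.toFun (update β k x) :=
  rfl

variable {e₂ : ℕ}

noncomputable def dotIndex (γ : Fin (f + 1 + e₂) → Fin n) : Fin (e₂ + 1) → Fin n :=
  Fin.cons (hA.toFun (γ ∘ Fin.castAdd e₂)) (γ ∘ Fin.natAdd (f + 1))

theorem dot_eq_comp (B : (Fin (e₂ + 1) → Fin n) → ℝ) : dot A B = B ∘ hA.dotIndex := by
  funext γ
  simp [dot, dotIndex, hA.apply_snoc, comp_def]

theorem mapsLinesToLines_dotIndex : MapsLinesToLines (hA.dotIndex (e₂ := e₂)) := by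
  intro k γ
  induction k using Fin.addCases with
  | left i =>
    refine ⟨0, hA.dotIndex γ, hA.updateEquiv i (γ ∘ Fin.castAdd e₂), fun x => ?_⟩
    simp [dotIndex, update_comp_eq_of_injective _ (Fin.castAdd_injective _ _),
      update_comp_eq_of_forall_ne _ _ fun j => Fin.natAdd_ne_castAdd j i]
  | right i =>
    refine ⟨i.succ, hA.dotIndex γ, Equiv.refl _, fun x => ?_⟩
    simp [dotIndex, update_comp_eq_of_injective _ (Fin.natAdd_injective _ _),
      update_comp_eq_of_forall_ne _ _ fun j => (Fin.natAdd_ne_castAdd i j).symm,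
      Fin.cons_update]

theorem dotIndex_append (β : Fin (f + 1) → Fin n) (δ : Fin e₂ → Fin n) :
    hA.dotIndex (Fin.append β δ) = Fin.cons (hA.toFun β) δ := by
  simp [dotIndex, comp_def]

theorem isPolystochastic_dot (hA : isMPerm (f + 1 + 1) n A) {B : (Fin (e₂ + 1) → Fin n) → ℝ}
    (hB : isPolystochastic (e₂ + 1) n B) :
    isPolystochastic (f + 1 + e₂) n (dot A B) :=
  hA.dot_eq_comp B ▸ hB.comp hA.mapsLinesToLines_dotIndex

noncomputable def dotIndexSection (β : Fin (f + 1) → Fin n) (α : Fin (e₂ + 1) → Fin n) :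
    Fin (f + 1 + e₂) → Fin n :=
  Fin.append (update β 0 ((hA.updateEquiv 0 β).symm (α 0))) (Fin.tail α)

theorem leftInverse_dotIndex_dotIndexSection (β : Fin (f + 1) → Fin n) :
    LeftInverse hA.dotIndex (hA.dotIndexSection (e₂ := e₂) β) := by
  intro α
  rw [dotIndexSection, dotIndex_append, ← updateEquiv_apply, Equiv.apply_symm_apply,
    Fin.cons_self_tail]

theorem dotIndexSection_cons (β : Fin (f + 1) → Fin n) (δ : Fin e₂ → Fin n) :
    hA.dotIndexSection β (Fin.cons (hA.toFun β) δ) = Fin.append β δ := by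
  have h : (hA.updateEquiv 0 β).symm (hA.toFun β) = β 0 := by
    rw [Equiv.symm_apply_eq, updateEquiv_apply, update_eq_self]
  rw [dotIndexSection, Fin.cons_zero, Fin.tail_cons, h, update_eq_self]

theorem mapsLinesToLines_dotIndexSection (β : Fin (f + 1) → Fin n) :
    MapsLinesToLines (hA.dotIndexSection (e₂ := e₂) β) := by
  intro k α
  induction k using Fin.cases with
  | zero =>
    refine ⟨Fin.castAdd e₂ 0, Fin.append β (Fin.tail α), (hA.updateEquiv 0 β).symm, fun x => ?_⟩
    simp [dotIndexSection, Fin.append_update_left]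
  | succ j =>
    refine ⟨Fin.natAdd (f + 1) j, hA.dotIndexSection β α, Equiv.refl _, fun x => ?_⟩
    simp [dotIndexSection, Fin.append_update_right, update_of_ne (Fin.succ_ne_zero j).symm]

theorem isVertex_dot (hA : isMPerm (f + 1 + 1) n A) {B : (Fin (e₂ + 1) → Fin n) → ℝ}
    (hB : isVertex (e₂ + 1) n B) :
    isVertex (f + 1 + e₂) n (dot A B) := by
  refine isVertex_of_cover hB (hA.isPolystochastic_dot hB.1) fun γ => ?_
  refine ⟨hA.dotIndexSection (γ ∘ Fin.castAdd e₂), hA.mapsLinesToLines_dotIndexSection _, ?_,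
    Fin.cons (hA.toFun (γ ∘ Fin.castAdd e₂)) (γ ∘ Fin.natAdd (f + 1)), ?_⟩
  · rw [hA.dot_eq_comp, comp_assoc, (hA.leftInverse_dotIndex_dotIndexSection _).comp_eq_id,
      comp_id]
  · rw [dotIndexSection_cons]
    exact Fin.append_castAdd_natAdd

theorem card_filter_toFun_eq (y : Fin n) : #{β | hA.toFun β = y} = n ^ f := by
  refine (card_filter_eq_of_bijective_cons hA.toFun (fun b => ?_) y).trans (by simp)
  simpa [Fin.update_cons_zero] using hA.bijective_toFun_update 0 (Fin.cons y b)

theorem card_filter_dotIndex_eq (α : Fin (e₂ + 1) → Fin n) :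
    #{γ | hA.dotIndex γ = α} = n ^ f := by
  rw [← hA.card_filter_toFun_eq (α 0), ← Fintype.card_subtype, ← Fintype.card_subtype]
  refine Fintype.card_congr
    { toFun := fun γ => ⟨γ.1 ∘ Fin.castAdd e₂, congrFun γ.2 0⟩
      invFun := fun β => ⟨Fin.append β.1 (Fin.tail α), by
        rw [dotIndex_append, β.2, Fin.cons_self_tail]⟩
      left_inv := fun γ => by
        have : γ.1 ∘ Fin.natAdd (f + 1) = Fin.tail α := congrArg Fin.tail γ.2
        ext1
        change Fin.append (γ.1 ∘ Fin.castAdd e₂) (Fin.tail α) = γ.1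
        rw [← this]
        exact Fin.append_castAdd_natAdd
      right_inv := fun β => by ext1; exact funext (Fin.append_left _ _) }

theorem ncard_msupport_dot (hA : isMPerm (f + 1 + 1) n A) (B : (Fin (e₂ + 1) → Fin n) → ℝ) :
    (msupport (dot A B)).ncard = n ^ f * (msupport B).ncard := by
  rw [hA.dot_eq_comp]
  exact ncard_preimage_of_card_filter_eq hA.dotIndex hA.card_filter_dotIndex_eq (msupport B)

end isMPerm

theorem dot_perm_vertex {f e₂ n : ℕ} (A : (Fin (f + 1 + 1) → Fin n) → ℝ)
    (hA : isMPerm (f + 1 + 1) n A) (B : (Fin (e₂ + 1) → Fin n) → ℝ)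
    (hB : isVertex (e₂ + 1) n B) :
    isVertex (f + 1 + e₂) n (dot A B) ∧
      (msupport (dot A B)).ncard = n ^ f * (msupport B).ncard :=
  ⟨hA.isVertex_dot hB, hA.ncard_msupport_dot B⟩
end

section
/- Let A be a d-dimensional polystochastic matrix of order n with parallel hyperplanes Γ₁,…,Γ_n in some direction. If Γ₁,…,Γ_{n−1} are vertices of Ω_n^{d−1}, then A is a vertex of Ω_n^d. -/
lemma insertNth_update' {e n : ℕ} (k : Fin (e+1)) (c : Fin n) (β : Fin e → Fin n)
    (j : Fin e) (x : Fin n) :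
    k.insertNth c (Function.update β j x) =
      Function.update (k.insertNth c β : Fin (e+1) → Fin n) (k.succAbove j) x := by
  ext i
  cases i using k.succAboveCases with
  | x => simp [Function.update_of_ne (Fin.succAbove_ne k j).symm]
  | p m =>
    rcases eq_or_ne m j with rfl | hm
    · simp
    · simp [Function.update_of_ne hm,
        Function.update_of_ne (fun hh => hm (Fin.succAbove_right_injective hh))]

lemma hyper_poly {e n : ℕ} (B : (Fin (e+1) → Fin n) → ℝ) (hB : isPolystochastic (e+1) n B)
    (k : Fin (e+1)) (c : Fin n) :
    isPolystochastic e n (fun β => B (k.insertNth c β)) := by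
  refine ⟨fun β => hB.1 _, fun j β => ?_⟩
  simp only [insertNth_update']
  exact hB.2 (k.succAbove j) (k.insertNth c β)

theorem vertex_of_hyperplane_vertices {e n : ℕ} (A : (Fin (e + 1) → Fin n) → ℝ)
    (hA : isPolystochastic (e + 1) n A) (k : Fin (e + 1))
    (h : ∀ c : Fin n, (c : ℕ) + 1 < n →
      isVertex e n (fun β : Fin e → Fin n => A (k.insertNth c β))) :
    isVertex (e + 1) n A := by
  refine ⟨hA, fun B C hB hC t ht0 ht1 hEq => ?_⟩
  have hsmall : ∀ (D : (Fin (e+1) → Fin n) → ℝ), isPolystochastic (e+1) n D →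
      ((∀ α, A α = t * D α + (1 - t) * C α) ∨ (∀ α, A α = t * B α + (1 - t) * D α)) →
      ∀ α : Fin (e+1) → Fin n, (α k : ℕ) + 1 < n → D α = A α := by
    intro D hD hcase α hα
    have hv := h (α k) hα
    have hDh := hyper_poly D hD k (α k)
    have hBh := hyper_poly B hB k (α k)
    have hCh := hyper_poly C hC k (α k)
    have : (fun β => D (k.insertNth (α k) β)) = (fun β => A (k.insertNth (α k) β)) := by
      rcases hcase with hc | hc
      · exact (hv.2 _ _ hDh hCh t ht0 ht1 (fun β => hc _)).1
      · exact (hv.2 _ _ hBh hDh t ht0 ht1 (fun β => hc _)).2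
    have := congrFun this (k.removeNth α)
    simpa [Fin.insertNth_self_removeNth] using this
  have hall : ∀ (D : (Fin (e+1) → Fin n) → ℝ), isPolystochastic (e+1) n D →
      ((∀ α, A α = t * D α + (1 - t) * C α) ∨ (∀ α, A α = t * B α + (1 - t) * D α)) →
      D = A := by
    intro D hD hcase
    funext α
    by_cases hα : (α k : ℕ) + 1 < n
    · exact hsmall D hD hcase α hα
    · -- α k is the last index
      have hupd : ∀ (E : (Fin (e+1) → Fin n) → ℝ), isPolystochastic (e+1) n E →
          E α = 1 - ∑ x ∈ Finset.univ.erase (α k), E (Function.update α k x) := by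
        intro E hE
        have hs := hE.2 k α
        rw [← Finset.add_sum_erase _ _ (Finset.mem_univ (α k))] at hs
        rw [Function.update_eq_self] at hs
        linarith
      rw [hupd D hD, hupd A hA]
      congr 1
      apply Finset.sum_congr rfl
      intro x hx
      have hxne : x ≠ α k := Finset.ne_of_mem_erase hx
      have hxlt : (x : ℕ) + 1 < n := by
        have h1 : (x : ℕ) < n := x.isLt
        have h2 : (α k : ℕ) < n := (α k).isLt
        have h3 : n ≤ (α k : ℕ) + 1 := not_lt.mp hα
        have : (x : ℕ) ≠ (α k : ℕ) := fun hh => hxne (Fin.ext hh)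
        omega
      have : (Function.update α k x) k = x := by simp
      have := hsmall D hD hcase (Function.update α k x) (by rw [this]; exact hxlt)
      rw [this]
  exact ⟨hall B hB (Or.inl hEq), hall C hC (Or.inr hEq)⟩
end

section
/- Let B be a d-dimensional zero-sum matrix of order n, and let α, β ∈ I_n^d differ in exactly d−k positions. Let Γ(α,β) be the set of all indices γ such that γ_i = α_i at each position where α_i ≠ β_i, and γ_i ≠ β_i at each position where α_i = β_i. Then b_α = (−1)^k · Σ_{γ ∈ Γ(α,β)} b_γ. -/
lemma zero_sum_aux {d n : ℕ} (B : (Fin d → Fin n) → ℝ)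
    (hB : ∀ (p : Fin d) (α : Fin d → Fin n), ∑ x : Fin n, B (Function.update α p x) = 0)
    (β : Fin d → Fin n) (S : Finset (Fin d)) :
    ∀ α : Fin d → Fin n, (∀ i ∈ S, α i = β i) →
    B α = (-1 : ℝ) ^ S.card *
      ∑ γ ∈ Finset.univ.filter (fun γ : Fin d → Fin n =>
          (∀ i ∉ S, γ i = α i) ∧ (∀ i ∈ S, γ i ≠ β i)), B γ := by
  induction S using Finset.induction with
  | empty =>
    intro α hα
    have : Finset.univ.filter (fun γ : Fin d → Fin n =>
        (∀ i ∉ (∅ : Finset (Fin d)), γ i = α i) ∧ (∀ i ∈ (∅ : Finset (Fin d)), γ i ≠ β i))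
        = {α} := by
      ext γ
      simp [funext_iff]
    rw [this]
    simp
  | @insert j S' hj IH =>
    intro α hα
    have hαβj : α j = β j := hα j (Finset.mem_insert_self j S')
    have hIH := IH α (fun i hi => hα i (Finset.mem_insert_of_mem hi))
    -- key: sum over Γ(insert j S') = - sum over Γ(S')
    set Γ' := Finset.univ.filter (fun γ : Fin d → Fin n =>
        (∀ i ∉ S', γ i = α i) ∧ (∀ i ∈ S', γ i ≠ β i)) with hΓ'
    set Γ := Finset.univ.filter (fun γ : Fin d → Fin n =>
        (∀ i ∉ insert j S', γ i = α i) ∧ (∀ i ∈ insert j S', γ i ≠ β i)) with hΓ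
    have key : ∑ γ ∈ Γ, B γ = - ∑ γ ∈ Γ', B γ := by
      have hprod : ∑ p ∈ Γ' ×ˢ (Finset.univ.erase (β j)), B (Function.update p.1 j p.2)
          = ∑ γ ∈ Γ, B γ := by
        refine Finset.sum_bij' (fun p _ => Function.update p.1 j p.2)
          (fun δ _ => (Function.update δ j (α j), δ j)) ?_ ?_ ?_ ?_ ?_
        case refine_2 =>
          intro δ hδ
          rw [hΓ, Finset.mem_filter] at hδ
          obtain ⟨-, h1, h2⟩ := hδ
          rw [Finset.mem_product]
          constructor
          · rw [hΓ', Finset.mem_filter]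
            refine ⟨Finset.mem_univ _, fun i hi => ?_, fun i hi => ?_⟩
            · by_cases hij : i = j
              · subst hij; simp
              · simp only [Function.update_of_ne hij]
                exact h1 i (by simp [hij, hi])
            · have hij : i ≠ j := fun h => hj (h ▸ hi)
              simp only [Function.update_of_ne hij]
              exact h2 i (Finset.mem_insert_of_mem hi)
          · exact Finset.mem_erase.2 ⟨h2 j (Finset.mem_insert_self j S'), Finset.mem_univ _⟩
        case refine_1 =>
          intro p hp
          rw [Finset.mem_product] at hp
          obtain ⟨hp1, hp2⟩ := hp
          rw [hΓ', Finset.mem_filter] at hp1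
          obtain ⟨-, h1, h2⟩ := hp1
          rw [hΓ, Finset.mem_filter]
          refine ⟨Finset.mem_univ _, fun i hi => ?_, fun i hi => ?_⟩
          · have hij : i ≠ j := fun h => hi (h ▸ Finset.mem_insert_self j S')
            simp only [Function.update_of_ne hij]
            exact h1 i (fun h => hi (Finset.mem_insert_of_mem h))
          · by_cases hij : i = j
            · subst hij; simpa using (Finset.mem_erase.1 hp2).1
            · simp only [Function.update_of_ne hij]
              exact h2 i ((Finset.mem_insert.1 hi).resolve_left hij)
        case refine_4 =>
          intro δ hδ
          rw [hΓ, Finset.mem_filter] at hδ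
          simp [Function.update_idem]
        case refine_3 =>
          intro p hp
          rw [Finset.mem_product] at hp
          obtain ⟨hp1, hp2⟩ := hp
          rw [hΓ', Finset.mem_filter] at hp1
          have h3 : p.1 j = α j := hp1.2.1 j hj
          refine Prod.ext ?_ ?_
          · show Function.update (Function.update p.1 j p.2) j (α j) = p.1
            rw [Function.update_idem, ← h3, Function.update_eq_self]
          · show Function.update p.1 j p.2 j = p.2
            simp
        case refine_5 =>
          intro δ hδ
          rfl
      rw [← hprod, Finset.sum_product]
      rw [← Finset.sum_neg_distrib]
      refine Finset.sum_congr rfl fun γ hγ => ?_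
      rw [hΓ', Finset.mem_filter] at hγ
      have hγj : γ j = β j := by rw [hγ.2.1 j hj, hαβj]
      have h0 := hB j γ
      have := Finset.add_sum_erase Finset.univ (fun x => B (Function.update γ j x))
        (Finset.mem_univ (β j))
      rw [h0] at this
      have hupd : Function.update γ j (β j) = γ := by
        rw [← hγj]; exact Function.update_eq_self j γ
      simp only [hupd] at this
      show ∑ y ∈ Finset.univ.erase (β j), B (Function.update γ j y) = -B γ
      linarith
    rw [Finset.card_insert_of_notMem hj, key, hIH]
    ring

theorem zero_sum_recover {d n : ℕ} (B : (Fin d → Fin n) → ℝ)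
    (hB : ∀ (p : Fin d) (α : Fin d → Fin n), ∑ x : Fin n, B (Function.update α p x) = 0)
    (k : ℕ) (hk : k ≤ d) (α β : Fin d → Fin n)
    (hdist : (Finset.univ.filter fun i => α i ≠ β i).card = d - k) :
    B α = (-1 : ℝ) ^ k *
      ∑ γ ∈ Finset.univ.filter (fun γ : Fin d → Fin n =>
          (∀ i, α i ≠ β i → γ i = α i) ∧ (∀ i, α i = β i → γ i ≠ β i)), B γ := by
  set S : Finset (Fin d) := Finset.univ.filter (fun i => α i = β i) with hS
  have hmem : ∀ i, i ∈ S ↔ α i = β i := by intro i; simp [hS]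
  have hcard : S.card = k := by
    have h1 : S.card + (Finset.univ.filter fun i => ¬ α i = β i).card = d := by
      rw [hS]
      simpa using Finset.card_filter_add_card_filter_not
        (s := (Finset.univ : Finset (Fin d))) (p := fun i => α i = β i)
    have h2 : (Finset.univ.filter fun i => ¬ α i = β i).card = d - k := hdist
    omega
  have key := zero_sum_aux B hB β S α (fun i hi => (hmem i).1 hi)
  have hfilt : (Finset.univ.filter (fun γ : Fin d → Fin n =>
      (∀ i ∉ S, γ i = α i) ∧ (∀ i ∈ S, γ i ≠ β i)))
      = Finset.univ.filter (fun γ : Fin d → Fin n =>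
      (∀ i, α i ≠ β i → γ i = α i) ∧ (∀ i, α i = β i → γ i ≠ β i)) := by
    ext γ
    simp only [Finset.mem_filter, Finset.mem_univ, true_and]
    constructor
    · rintro ⟨h1, h2⟩
      exact ⟨fun i hi => h1 i (fun h => hi ((hmem i).1 h)),
             fun i hi => h2 i ((hmem i).2 hi)⟩
    · rintro ⟨h1, h2⟩
      exact ⟨fun i hi => h1 i (fun h => hi ((hmem i).2 h)),
             fun i hi => h2 i ((hmem i).1 hi)⟩
  rw [key, hcard, hfilt]
end

section
/- Let A be a 4-dimensional polystochastic matrix of order 3 that is not a (0,1)-matrix. If some hyperplane Γ of A is a (0,1)-matrix, then A is a convex combination of two multidimensional permutations; in particular A is not a vertex of Ω_3^4. -/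
/-
The hyperplane `Γ` of `A` at `x_k = c` is a 3-dimensional permutation, i.e. the graph
`z = G a b` of a Latin square, and the neighbouring hyperplane `B` at `x_k = c + 1` vanishes on
it. The cyclic shifts `Γ₁`, `Γ₂` of `Γ` in its last coordinate are permutations with
`Γ + Γ₁ + Γ₂ = 1`. On every `3 × 3` section of `B` through that coordinate, row and column sums
force `B` to be constant on the support of `Γ₁`; the sections through a common point of that
support share the constant `s`, so `B = s Γ₁ + (1 - s) Γ₂`, and the line sums in direction `k`
give `(1 - s) Γ₁ + s Γ₂` for the third hyperplane. Stacking `(Γ, Γ₁, Γ₂)` and `(Γ, Γ₂, Γ₁)`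
yields permutations `P₁`, `P₂` with `A = s P₁ + (1 - s) P₂`, and `0 < s < 1` because `A` is not
a (0,1)-matrix.
-/

open Function Finset

lemma Fin.sum_univ_three_add {M : Type*} [AddCommMonoid M] (f : Fin 3 → M) (x : Fin 3) :
    ∑ y, f y = f x + f (x + 1) + f (x + 2) := by
  rw [← Equiv.sum_comp (Equiv.addLeft x) f, Fin.sum_univ_three]
  simp

lemma Fin.apply_eq_apply_zero_of_apply_add_one {n : ℕ} {α : Sort*} {f : Fin (n + 1) → α}
    (h : ∀ x, f (x + 1) = f x) (x : Fin (n + 1)) : f x = f 0 := by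
  induction x using Fin.induction with
  | zero => rfl
  | succ i ih => rw [← Fin.coeSucc_eq_succ, h, ih]

lemma exists_eq_one_of_sum_eq_one {ι : Type*} [Fintype ι] {f : ι → ℝ}
    (h01 : ∀ i, f i = 0 ∨ f i = 1) (hsum : ∑ i, f i = 1) : ∃ i, f i = 1 := by
  by_contra! h
  simp [fun i => (h01 i).resolve_right (h i)] at hsum

lemma eq_zero_of_sum_eq_one {ι : Type*} [Fintype ι] [DecidableEq ι] {f : ι → ℝ}
    (hf : ∀ i, 0 ≤ f i) (hsum : ∑ i, f i = 1) {i j : ι} (hi : f i = 1) (hji : j ≠ i) :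
    f j = 0 := by
  have : f i + f j ≤ 1 := by
    rw [← hsum, ← Finset.add_sum_erase _ _ (mem_univ i)]
    gcongr
    exact single_le_sum (fun x _ => hf x) (mem_erase.2 ⟨hji, mem_univ j⟩)
  linarith [hf j]

section Layers

variable {d n : ℕ}

def slice (A : (Fin (d + 1) → Fin n) → ℝ) (k : Fin (d + 1)) (x : Fin n) :
    (Fin d → Fin n) → ℝ :=
  fun β => A (k.insertNth x β)

def stack (k : Fin (d + 1)) (L : Fin n → (Fin d → Fin n) → ℝ) : (Fin (d + 1) → Fin n) → ℝ :=
  fun α => L (α k) (k.removeNth α)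

@[simp]
lemma stack_insertNth (k : Fin (d + 1)) (L : Fin n → (Fin d → Fin n) → ℝ) (x : Fin n)
    (β : Fin d → Fin n) : stack k L (k.insertNth x β) = L x β := by
  simp [stack]

lemma exists_eq_insertNth (k : Fin (d + 1)) (α : Fin (d + 1) → Fin n) :
    ∃ x β, α = k.insertNth x β :=
  ⟨α k, k.removeNth α, (k.insertNth_self_removeNth α).symm⟩

lemma isPolystochastic.stack {k : Fin (d + 1)} {L : Fin n → (Fin d → Fin n) → ℝ}
    (hL : ∀ x, isPolystochastic d n (L x)) (hsum : ∀ β, ∑ x, L x β = 1) :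
    isPolystochastic (d + 1) n (stack k L) := by
  refine ⟨fun α => ?_, fun i α => ?_⟩ <;> obtain ⟨x, β, rfl⟩ := exists_eq_insertNth k α
  · simpa using (hL x).1 β
  rcases k.eq_self_or_eq_succAbove i with rfl | ⟨j, rfl⟩
  · simpa using hsum β
  · simpa [← Fin.insertNth_update] using (hL x).2 j β

lemma isMPerm.stack {k : Fin (d + 1)} {L : Fin n → (Fin d → Fin n) → ℝ}
    (hL : ∀ x, isMPerm d n (L x)) (hsum : ∀ β, ∑ x, L x β = 1) : isMPerm (d + 1) n (stack k L) :=
  ⟨isPolystochastic.stack (fun x => (hL x).1) hsum, fun α => (hL (α k)).2 _⟩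

namespace isPolystochastic

variable {A : (Fin (d + 1) → Fin n) → ℝ}

lemma slice (hA : isPolystochastic (d + 1) n A) (k : Fin (d + 1)) (x : Fin n) :
    isPolystochastic d n (_root_.slice A k x) :=
  ⟨fun β => hA.1 _, fun j β => by
    simpa [_root_.slice, ← Fin.insertNth_update] using hA.2 (k.succAbove j) (k.insertNth x β)⟩

lemma sum_slice [NeZero n] (hA : isPolystochastic (d + 1) n A) (k : Fin (d + 1))
    (β : Fin d → Fin n) : ∑ x, _root_.slice A k x β = 1 := by
  simpa [_root_.slice] using hA.2 k (k.insertNth 0 β)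

end isPolystochastic

end Layers

def shift {d n : ℕ} (m : Fin d) (v : Fin n) (A : (Fin d → Fin n) → ℝ) :
    (Fin d → Fin n) → ℝ :=
  fun α => A (update α m (α m - v))

section Shift

variable {d n : ℕ} [NeZero n] {A : (Fin d → Fin n) → ℝ}

lemma shift_zero (m : Fin d) (A : (Fin d → Fin n) → ℝ) : shift m 0 A = A := by
  funext α; simp [shift]

lemma isPolystochastic.shift (hA : isPolystochastic d n A) (m : Fin d) (v : Fin n) :
    isPolystochastic d n (_root_.shift m v A) := by
  refine ⟨fun α => hA.1 _, fun j α => ?_⟩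
  rcases eq_or_ne j m with rfl | hjm
  · simpa [_root_.shift] using
      ((Equiv.subRight v).sum_comp fun y => A (update α j y)).trans (hA.2 j α)
  · simpa [_root_.shift, update_of_ne hjm.symm, update_comm hjm] using
      hA.2 j (update α m (α m - v))

lemma isMPerm.shift (hA : isMPerm d n A) (m : Fin d) (v : Fin n) :
    isMPerm d n (_root_.shift m v A) :=
  ⟨hA.1.shift m v, fun _ => hA.2 _⟩

lemma isPolystochastic.sum_shift (hA : isPolystochastic d n A) (m : Fin d) (α : Fin d → Fin n) :
    ∑ v, _root_.shift m v A α = 1 := by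
  simpa [_root_.shift] using
    ((Equiv.subLeft (α m)).sum_comp fun y => A (update α m y)).trans (hA.2 m α)

lemma isMPerm.stack_shift (hA : isMPerm d n A) (k : Fin (d + 1)) (m : Fin d)
    (e : Equiv.Perm (Fin n)) : isMPerm (d + 1) n (_root_.stack k fun x => _root_.shift m (e x) A) :=
  isMPerm.stack (fun x => hA.shift m (e x)) fun β =>
    (Equiv.sum_comp e fun v => _root_.shift m v A β).trans (hA.1.sum_shift m β)

end Shift

lemma Equiv.Perm.apply_add_one_eq_of_sum_eq_one (g : Equiv.Perm (Fin 3)) {T : Fin 3 → Fin 3 → ℝ}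
    (hzero : ∀ a, T a (g a) = 0) (hrow : ∀ a, ∑ z, T a z = 1) (hcol : ∀ z, ∑ a, T a z = 1)
    (a a' : Fin 3) : T a (g a + 1) = T a' (g a' + 1) := by
  set φ : Fin 3 → ℝ := fun x => T (g.symm x) (x + 1)
  set ψ : Fin 3 → ℝ := fun x => T (g.symm x) (x + 2)
  have hφψ : ∀ x, φ x + ψ x = 1 := fun x => by
    have := hrow (g.symm x)
    rw [Fin.sum_univ_three_add _ x, show T (g.symm x) x = 0 by simpa using hzero (g.symm x)] at this
    linarith
  have hψφ : ∀ x, ψ x + φ (x + 1) = 1 := fun x => by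
    have := hcol (x + 2)
    rw [← Equiv.sum_comp g.symm, Fin.sum_univ_three_add _ x,
      show T (g.symm (x + 2)) (x + 2) = 0 by simpa using hzero (g.symm (x + 2))] at this
    simp only [φ, ψ, show x + 1 + 1 = x + 2 by grind]
    linarith
  have hconst : ∀ x, φ x = φ 0 :=
    Fin.apply_eq_apply_zero_of_apply_add_one fun x => by linarith [hφψ x, hψφ x]
  simpa [φ] using (hconst (g a)).trans (hconst (g a')).symm

namespace isPolystochastic

variable {n : ℕ} {B : (Fin 3 → Fin n) → ℝ}

lemma sum_vecCons (hB : isPolystochastic 3 n B) (a b z : Fin n) :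
    ∑ x, B ![x, b, z] = 1 ∧ ∑ x, B ![a, x, z] = 1 ∧ ∑ x, B ![a, b, x] = 1 := by
  refine ⟨?_, ?_, ?_⟩
  · convert hB.2 0 ![a, b, z] using 3 with x; ext i; fin_cases i <;> rfl
  · convert hB.2 1 ![a, b, z] using 3 with x; ext i; fin_cases i <;> rfl
  · convert hB.2 2 ![a, b, z] using 3 with x; ext i; fin_cases i <;> rfl

end isPolystochastic

lemma isMPerm.exists_latinSquare {n : ℕ} {Γ : (Fin 3 → Fin n) → ℝ} (hΓ : isMPerm 3 n Γ) :
    ∃ G : Fin n → Fin n → Fin n, (∀ a b z, Γ ![a, b, z] = if z = G a b then 1 else 0) ∧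
      (∀ b, Injective (G · b)) ∧ ∀ a, Injective (G a ·) := by
  have hline := hΓ.1.sum_vecCons
  choose G hG using fun a b =>
    exists_eq_one_of_sum_eq_one (fun z => hΓ.2 ![a, b, z]) (hline a b a).2.2
  have hΓG : ∀ a b z, Γ ![a, b, z] = if z = G a b then 1 else 0 := fun a b z => by
    split_ifs with h
    · exact h ▸ hG a b
    · exact eq_zero_of_sum_eq_one (fun _ => hΓ.1.1 _) (hline a b a).2.2 (hG a b) h
  refine ⟨G, hΓG, fun b a a' h => ?_, fun a b b' h => ?_⟩
  · by_contra hne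
    have := eq_zero_of_sum_eq_one (fun _ => hΓ.1.1 _) (hline a b (G a b)).1 (hG a b) (Ne.symm hne)
    simp [hΓG, h] at this
  · by_contra hne
    have := eq_zero_of_sum_eq_one (fun _ => hΓ.1.1 _) (hline a b (G a b)).2.1 (hG a b) (Ne.symm hne)
    simp [hΓG, h] at this

lemma shift_vecCons {n : ℕ} (v : Fin n) (A : (Fin 3 → Fin n) → ℝ) (a b z : Fin n) :
    shift 2 v A ![a, b, z] = A ![a, b, z - v] := by
  unfold shift; congr 1; ext i; fin_cases i <;> rfl

theorem exists_eq_shift_combination {Γ B : (Fin 3 → Fin 3) → ℝ} (hΓ : isMPerm 3 3 Γ)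
    (hB : isPolystochastic 3 3 B) (hBΓ : ∀ β, Γ β = 1 → B β = 0) :
    ∃ s, 0 ≤ s ∧ s ≤ 1 ∧ ∀ β, B β = s * shift 2 1 Γ β + (1 - s) * shift 2 2 Γ β := by
  obtain ⟨G, hΓG, hGa, hGb⟩ := hΓ.exists_latinSquare
  have hline := hB.sum_vecCons
  have hzero : ∀ a b, B ![a, b, G a b] = 0 := fun a b => hBΓ _ (by simp [hΓG])
  have hconst : ∀ a b, B ![a, b, G a b + 1] = B ![0, 0, G 0 0 + 1] := fun a b => by
    have ha := Equiv.Perm.apply_add_one_eq_of_sum_eq_one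
      (Equiv.ofBijective _ (hGa b).bijective_of_finite) (T := fun a z => B ![a, b, z])
      (fun a => hzero a b) (fun a => (hline a b 0).2.2) (fun z => (hline 0 b z).1) a 0
    have hb := Equiv.Perm.apply_add_one_eq_of_sum_eq_one
      (Equiv.ofBijective _ (hGb 0).bijective_of_finite) (T := fun b z => B ![0, b, z])
      (fun b => hzero 0 b) (fun b => (hline 0 b 0).2.2) (fun z => (hline 0 0 z).2.1) b 0
    exact ha.trans hb
  set s := B ![0, 0, G 0 0 + 1]
  have hpair : ∀ a b, B ![a, b, G a b + 1] + B ![a, b, G a b + 2] = 1 := fun a b => by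
    have := (hline a b 0).2.2
    rwa [Fin.sum_univ_three_add _ (G a b), hzero, zero_add] at this
  refine ⟨s, hB.1 _, by linarith [hpair 0 0, hB.1 ![0, 0, G 0 0 + 2]], fun β => ?_⟩
  obtain ⟨a, b, z, rfl⟩ : ∃ a b z, β = ![a, b, z] :=
    ⟨β 0, β 1, β 2, by ext i; fin_cases i <;> rfl⟩
  obtain ⟨i, rfl⟩ : ∃ i, z = G a b + i := ⟨z - G a b, by abel⟩
  simp only [shift_vecCons, hΓG]
  fin_cases i
  · simp [hzero]
  · simp [hconst, add_sub_assoc]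
  · have := hpair a b
    simp [hconst, add_sub_assoc] at this ⊢
    linarith

theorem eq_combination_stack_shift {d : ℕ} {A : (Fin (d + 1) → Fin 3) → ℝ}
    (hA : isPolystochastic (d + 1) 3 A) (k : Fin (d + 1)) (c : Fin 3) (m : Fin d) {s : ℝ}
    (hB : ∀ β, slice A k (c + 1) β =
      s * shift m 1 (slice A k c) β + (1 - s) * shift m 2 (slice A k c) β)
    (α : Fin (d + 1) → Fin 3) :
    A α = s * stack k (fun x => shift m (x - c) (slice A k c)) α +
      (1 - s) * stack k (fun x => shift m (c - x) (slice A k c)) α := by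
  obtain ⟨x, β, rfl⟩ := exists_eq_insertNth k α
  obtain ⟨i, rfl⟩ : ∃ i, x = c + i := ⟨x - c, by abel⟩
  have hsum := hA.sum_slice k β
  have hshift := (hA.slice k c).sum_shift m β
  rw [Fin.sum_univ_three_add _ c] at hsum
  rw [Fin.sum_univ_three, shift_zero] at hshift
  simp only [stack_insertNth, add_sub_cancel_left, sub_add_cancel_left]
  change slice A k (c + i) β = _
  have hneg₁ : (-1 : Fin 3) = 2 := rfl
  have hneg₂ : (-2 : Fin 3) = 1 := rfl
  fin_cases i
  · simp only [Fin.zero_eta, add_zero, neg_zero, shift_zero]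
    ring
  · simpa [hneg₁] using hB β
  · simp only [Fin.reduceFinMk, Fin.isValue, hneg₂]
    linarith [hB β]

theorem hyperplane_01_implies_not_vertex (A : (Fin 4 → Fin 3) → ℝ)
    (hA : isPolystochastic 4 3 A) (hnot : ¬ ∀ α, A α = 0 ∨ A α = 1)
    (k : Fin 4) (c : Fin 3)
    (hΓ : ∀ β : Fin 3 → Fin 3, A (k.insertNth c β) = 0 ∨ A (k.insertNth c β) = 1) :
    (∃ (t : ℝ) (P₁ P₂ : (Fin 4 → Fin 3) → ℝ), 0 < t ∧ t < 1 ∧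
        isMPerm 4 3 P₁ ∧ isMPerm 4 3 P₂ ∧ ∀ α, A α = t * P₁ α + (1 - t) * P₂ α) ∧
      ¬ isVertex 4 3 A := by
  set Γ := slice A k c
  have hΓperm : isMPerm 3 3 Γ := ⟨hA.slice k c, hΓ⟩
  have hBΓ : ∀ β, Γ β = 1 → slice A k (c + 1) β = 0 := fun β h =>
    eq_zero_of_sum_eq_one (fun x => hA.1 _) (hA.sum_slice k β) h (by grind)
  obtain ⟨s, hs0, hs1, hB⟩ := exists_eq_shift_combination hΓperm (hA.slice k (c + 1)) hBΓ
  set P₁ := stack k fun x => shift 2 (x - c) Γ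
  set P₂ := stack k fun x => shift 2 (c - x) Γ
  have hP₁ : isMPerm 4 3 P₁ := hΓperm.stack_shift k 2 (Equiv.subRight c)
  have hP₂ : isMPerm 4 3 P₂ := hΓperm.stack_shift k 2 (Equiv.subLeft c)
  have hAP : ∀ α, A α = s * P₁ α + (1 - s) * P₂ α := eq_combination_stack_shift hA k c 2 hB
  have hs : 0 < s ∧ s < 1 := by
    refine ⟨hs0.lt_of_ne ?_, hs1.lt_of_ne ?_⟩ <;> rintro rfl <;> apply hnot
    · simpa [hAP] using hP₂.2
    · simpa [hAP] using hP₁.2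
  refine ⟨⟨s, P₁, P₂, hs.1, hs.2, hP₁, hP₂, hAP⟩, fun hvertex => hnot ?_⟩
  obtain ⟨hP₁A, -⟩ := hvertex.2 P₁ P₂ hP₁.1 hP₂.1 s hs.1 hs.2 hAP
  exact hP₁A ▸ hP₁.2
end

section
/- Let A be a 4-dimensional polystochastic matrix of order 3 that is not a multidimensional permutation. If the support of A contains two indices α, β with Hamming distance ρ(α,β) = 3 and a_α = a_β = 1, then the hyperplane containing both α and β is a (0,1)-matrix. -/
lemma fin3_line (f : Fin 3 → ℝ) (hs : ∑ x, f x = 1) : f 0 + f 1 + f 2 = 1 := by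
  rw [← hs, Fin.sum_univ_three]

lemma fin3_neighbor (f : Fin 3 → ℝ) (hpos : ∀ x, 0 ≤ f x) (hs : ∑ x, f x = 1)
    {u v : Fin 3} (hu : f u = 1) (hv : v ≠ u) : f v = 0 := by
  have h := fin3_line f hs
  fin_cases u <;> fin_cases v <;> simp_all <;> linarith [hpos 0, hpos 1, hpos 2]

lemma fin3_third (f : Fin 3 → ℝ) (hs : ∑ x, f x = 1)
    {u v w : Fin 3} (huv : u ≠ v) (hwu : w ≠ u) (hwv : w ≠ v)
    (hu : f u = 0) (hv : f v = 0) : f w = 1 := by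
  have h := fin3_line f hs
  fin_cases u <;> fin_cases v <;> fin_cases w <;> simp_all <;> linarith

lemma fin3_tri (a b v : Fin 3) (h : a ≠ b) : v = a ∨ v = b ∨ v = -(a+b) := by
  revert h; revert a b v; decide

lemma fin3_third_ne (a b : Fin 3) (h : a ≠ b) : -(a+b) ≠ a ∧ -(a+b) ≠ b := by
  revert h; revert a b; decide

lemma fin4_d : ∀ i : Fin 4, i ≠ i+1 ∧ i ≠ i+2 ∧ i ≠ i+3 ∧ i+1 ≠ i+2 ∧ i+1 ≠ i+3 ∧ i+2 ≠ i+3 := by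
  decide

lemma fin4_all (i0 i1 i2 i3 : Fin 4) (d01 : i0 ≠ i1) (d02 : i0 ≠ i2) (d03 : i0 ≠ i3)
    (d12 : i1 ≠ i2) (d13 : i1 ≠ i3) (d23 : i2 ≠ i3) :
    ∀ j : Fin 4, j = i0 ∨ j = i1 ∨ j = i2 ∨ j = i3 := by
  revert d01 d02 d03 d12 d13 d23; revert i0 i1 i2 i3; decide

lemma core (P : Fin 3 → Fin 3 → Fin 3 → ℝ)
    (hpos : ∀ x y z, 0 ≤ P x y z)
    (hs1 : ∀ y z, ∑ x, P x y z = 1)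
    (hs2 : ∀ x z, ∑ y, P x y z = 1)
    (hs3 : ∀ x y, ∑ z, P x y z = 1)
    (a1 a2 a3 b1 b2 b3 : Fin 3)
    (hab1 : a1 ≠ b1) (hab2 : a2 ≠ b2) (hab3 : a3 ≠ b3)
    (ha : P a1 a2 a3 = 1) (hb : P b1 b2 b3 = 1)
    (v1 v2 v3 : Fin 3) : P v1 v2 v3 = 0 ∨ P v1 v2 v3 = 1 := by
  obtain ⟨hc1a, hc1b⟩ := fin3_third_ne a1 b1 hab1
  obtain ⟨hc2a, hc2b⟩ := fin3_third_ne a2 b2 hab2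
  obtain ⟨hc3a, hc3b⟩ := fin3_third_ne a3 b3 hab3
  have z1 : ∀ {x y z x'}, P x y z = 1 → x' ≠ x → P x' y z = 0 :=
    fun {x y z x'} h hne => fin3_neighbor (fun t => P t y z) (fun t => hpos t y z) (hs1 y z) h hne
  have z2 : ∀ {x y z y'}, P x y z = 1 → y' ≠ y → P x y' z = 0 :=
    fun {x y z y'} h hne => fin3_neighbor (fun t => P x t z) (fun t => hpos x t z) (hs2 x z) h hne
  have z3 : ∀ {x y z z'}, P x y z = 1 → z' ≠ z → P x y z' = 0 :=
    fun {x y z z'} h hne => fin3_neighbor (fun t => P x y t) (fun t => hpos x y t) (hs3 x y) h hne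
  have o1 : ∀ {u v w y z}, u ≠ v → w ≠ u → w ≠ v → P u y z = 0 → P v y z = 0 → P w y z = 1 :=
    fun {u v w y z} h1 h2 h3 hu hv => fin3_third (fun t => P t y z) (hs1 y z) h1 h2 h3 hu hv
  have o2 : ∀ {u v w x z}, u ≠ v → w ≠ u → w ≠ v → P x u z = 0 → P x v z = 0 → P x w z = 1 :=
    fun {u v w x z} h1 h2 h3 hu hv => fin3_third (fun t => P x t z) (hs2 x z) h1 h2 h3 hu hv
  have o3 : ∀ {u v w x y}, u ≠ v → w ≠ u → w ≠ v → P x y u = 0 → P x y v = 0 → P x y w = 1 :=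
    fun {u v w x y} h1 h2 h3 hu hv => fin3_third (fun t => P x y t) (hs3 x y) h1 h2 h3 hu hv
  have hbaa : P b1 a2 a3 = 0 := z1 ha hab1.symm
  have hcaa : P (-(a1+b1)) a2 a3 = 0 := z1 ha hc1a
  have haba : P a1 b2 a3 = 0 := z2 ha hab2.symm
  have haca : P a1 (-(a2+b2)) a3 = 0 := z2 ha hc2a
  have haab : P a1 a2 b3 = 0 := z3 ha hab3.symm
  have haac : P a1 a2 (-(a3+b3)) = 0 := z3 ha hc3a
  have habb : P a1 b2 b3 = 0 := z1 hb hab1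
  have hcbb : P (-(a1+b1)) b2 b3 = 0 := z1 hb hc1b
  have hbab : P b1 a2 b3 = 0 := z2 hb hab2
  have hbcb : P b1 (-(a2+b2)) b3 = 0 := z2 hb hc2b
  have hbba : P b1 b2 a3 = 0 := z3 hb hab3
  have hbbc : P b1 b2 (-(a3+b3)) = 0 := z3 hb hc3b
  have hcab : P (-(a1+b1)) a2 b3 = 1 := o1 hab1 hc1a hc1b haab hbab
  have hcba : P (-(a1+b1)) b2 a3 = 1 := o1 hab1 hc1a hc1b haba hbba
  have hacb : P a1 (-(a2+b2)) b3 = 1 := o2 hab2 hc2a hc2b haab habb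
  have hbca : P b1 (-(a2+b2)) a3 = 1 := o2 hab2 hc2a hc2b hbaa hbba
  have habc : P a1 b2 (-(a3+b3)) = 1 := o3 hab3 hc3a hc3b haba habb
  have hbac : P b1 a2 (-(a3+b3)) = 1 := o3 hab3 hc3a hc3b hbaa hbab
  have hacc : P a1 (-(a2+b2)) (-(a3+b3)) = 0 := z2 habc hc2b
  have hbcc : P b1 (-(a2+b2)) (-(a3+b3)) = 0 := z2 hbac hc2a
  have hcac : P (-(a1+b1)) a2 (-(a3+b3)) = 0 := z1 hbac hc1b
  have hcbc : P (-(a1+b1)) b2 (-(a3+b3)) = 0 := z1 habc hc1a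
  have hcca : P (-(a1+b1)) (-(a2+b2)) a3 = 0 := z2 hcba hc2b
  have hccb : P (-(a1+b1)) (-(a2+b2)) b3 = 0 := z2 hcab hc2a
  have hccc : P (-(a1+b1)) (-(a2+b2)) (-(a3+b3)) = 1 := o1 hab1 hc1a hc1b hacc hbcc
  rcases fin3_tri a1 b1 v1 hab1 with rfl | rfl | rfl <;>
    rcases fin3_tri a2 b2 v2 hab2 with rfl | rfl | rfl <;>
    rcases fin3_tri a3 b3 v3 hab3 with rfl | rfl | rfl <;>
    first
      | (left; assumption)
      | (right; assumption)

lemma main_aux (A : (Fin 4 → Fin 3) → ℝ) (hA : isPolystochastic 4 3 A)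
    (i0 i1 i2 i3 : Fin 4)
    (d01 : i0 ≠ i1) (d02 : i0 ≠ i2) (d03 : i0 ≠ i3)
    (d12 : i1 ≠ i2) (d13 : i1 ≠ i3) (d23 : i2 ≠ i3)
    (α β γ : Fin 4 → Fin 3)
    (h0 : α i0 = β i0) (h1 : α i1 ≠ β i1) (h2 : α i2 ≠ β i2) (h3 : α i3 ≠ β i3)
    (hα : A α = 1) (hβ : A β = 1) (hγ0 : γ i0 = α i0) :
    A γ = 0 ∨ A γ = 1 := by
  obtain ⟨hApos, hAsum⟩ := hA
  have hall := fin4_all i0 i1 i2 i3 d01 d02 d03 d12 d13 d23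
  set P : Fin 3 → Fin 3 → Fin 3 → ℝ := fun x y z =>
    A (Function.update (Function.update (Function.update α i1 x) i2 y) i3 z) with hP
  have hpos : ∀ x y z, 0 ≤ P x y z := fun x y z => hApos _
  have hs3 : ∀ x y, ∑ z, P x y z = 1 := fun x y => hAsum i3 _
  have hs2 : ∀ x z, ∑ y, P x y z = 1 := by
    intro x z
    have : ∀ y, P x y z =
        A (Function.update (Function.update (Function.update α i1 x) i3 z) i2 y) := by
      intro y
      simp only [hP]
      rw [Function.update_comm d23]
    simp only [this]
    exact hAsum i2 _
  have hs1 : ∀ y z, ∑ x, P x y z = 1 := by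
    intro y z
    have : ∀ x, P x y z =
        A (Function.update (Function.update (Function.update α i2 y) i3 z) i1 x) := by
      intro x
      simp only [hP]
      rw [Function.update_comm d12, Function.update_comm d13]
    simp only [this]
    exact hAsum i1 _
  have ha : P (α i1) (α i2) (α i3) = 1 := by
    simp only [hP, Function.update_eq_self]
    exact hα
  have hbfun : Function.update (Function.update (Function.update α i1 (β i1)) i2 (β i2)) i3 (β i3) = β := by
    funext j
    rcases hall j with rfl | rfl | rfl | rfl
    · rw [Function.update_of_ne d03, Function.update_of_ne d02, Function.update_of_ne d01, h0]
    · rw [Function.update_of_ne d13, Function.update_of_ne d12, Function.update_self]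
    · rw [Function.update_of_ne d23, Function.update_self]
    · rw [Function.update_self]
  have hb : P (β i1) (β i2) (β i3) = 1 := by
    simp only [hP, hbfun]; exact hβ
  have hγfun : Function.update (Function.update (Function.update α i1 (γ i1)) i2 (γ i2)) i3 (γ i3) = γ := by
    funext j
    rcases hall j with rfl | rfl | rfl | rfl
    · rw [Function.update_of_ne d03, Function.update_of_ne d02, Function.update_of_ne d01, ← hγ0]
    · rw [Function.update_of_ne d13, Function.update_of_ne d12, Function.update_self]
    · rw [Function.update_of_ne d23, Function.update_self]
    · rw [Function.update_self]
  have hg : P (γ i1) (γ i2) (γ i3) = A γ := by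
    simp only [hP, hγfun]
  rw [← hg]
  exact core P hpos hs1 hs2 hs3 (α i1) (α i2) (α i3) (β i1) (β i2) (β i3) h1 h2 h3 ha hb
    (γ i1) (γ i2) (γ i3)

theorem hyperplane_01_of_two_ones_dist3 (A : (Fin 4 → Fin 3) → ℝ)
    (hA : isPolystochastic 4 3 A) (hnot : ¬ isMPerm 4 3 A)
    (α β : Fin 4 → Fin 3)
    (hd : (Finset.univ.filter fun i => α i ≠ β i).card = 3)
    (hα : A α = 1) (hβ : A β = 1) :
    ∀ γ : Fin 4 → Fin 3, (∀ i, α i = β i → γ i = α i) → (A γ = 0 ∨ A γ = 1) := by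
  intro γ hγ
  have h4 : (Finset.univ.filter fun i => α i = β i).card = 1 := by
    have h := Finset.card_filter_add_card_filter_not
      (s := (Finset.univ : Finset (Fin 4))) (p := fun i => α i ≠ β i)
    simp only [not_not, hd, Finset.card_univ, Fintype.card_fin] at h
    omega
  obtain ⟨i0, hi0⟩ := Finset.card_eq_one.mp h4
  have h0 : α i0 = β i0 := by
    have : i0 ∈ Finset.univ.filter fun i => α i = β i := hi0 ▸ Finset.mem_singleton_self i0
    simpa using this
  have huniq : ∀ j, α j = β j → j = i0 := by
    intro j hj
    have : j ∈ ({i0} : Finset (Fin 4)) :=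
      hi0 ▸ Finset.mem_filter.mpr ⟨Finset.mem_univ _, hj⟩
    simpa using this
  obtain ⟨e1, e2, e3, e12, e13, e23⟩ := fin4_d i0
  have hne : ∀ j, j ≠ i0 → α j ≠ β j := fun j hj h => hj (huniq j h)
  exact main_aux A hA i0 (i0+1) (i0+2) (i0+3) e1 e2 e3 e12 e13 e23 α β γ h0
    (hne _ (Ne.symm e1)) (hne _ (Ne.symm e2)) (hne _ (Ne.symm e3)) hα hβ (hγ i0 h0)
end

section
/- For even d ≥ 2, the d-dimensional matrix A of order 3 defined by Construction 1 is polystochastic, and its support has size N(A) = 3^d − 3·2^{d−1} + 2. -/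
/-- `cnt α s` is the number of coordinates of `α` equal to `s`. -/
def cnt {d : ℕ} (α : Fin d → Fin 3) (s : Fin 3) : ℕ :=
  (Finset.univ.filter (fun t => α t = s)).card

/-- Construction 1 (even `d` case): the symmetric `d`-dimensional matrix of order `3`. -/
noncomputable def constr1 (d : ℕ) : (Fin d → Fin 3) → ℝ := fun α =>
  if cnt α 0 ≠ 0 ∧ cnt α 1 ≠ 0 ∧ cnt α 2 ≠ 0 then 1/3
  else if cnt α 0 = d then 1
  else if cnt α 1 = d ∨ cnt α 2 = d then 1/3
  else if cnt α 0 = 0 then (if Even (cnt α 1) then 0 else 2/3)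
  else if cnt α 1 = 0 then (if Even (cnt α 0) then 2/3 else 0)
  else if Even (cnt α 0) then 2/3 else 0

/-! ### Auxiliary definitions and lemmas -/

/-- `F d a b c` : value of construction 1 as a function of the counts. -/
noncomputable def Faux (d a b c : ℕ) : ℝ :=
  if a ≠ 0 ∧ b ≠ 0 ∧ c ≠ 0 then 1/3
  else if a = d then 1
  else if b = d ∨ c = d then 1/3
  else if a = 0 then (if Even b then 0 else 2/3)
  else if b = 0 then (if Even a then 2/3 else 0)
  else if Even a then 2/3 else 0

lemma constr1_eq_F {d : ℕ} (α : Fin d → Fin 3) :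
    constr1 d α = Faux d (cnt α 0) (cnt α 1) (cnt α 2) := rfl

lemma constr1_nonneg {d : ℕ} (α : Fin d → Fin 3) : 0 ≤ constr1 d α := by
  unfold constr1; split_ifs <;> norm_num

def ecnt {d : ℕ} (α : Fin d → Fin 3) (k : Fin d) (s : Fin 3) : ℕ :=
  ((Finset.univ.erase k).filter (fun t => α t = s)).card

lemma cnt_update {d : ℕ} (α : Fin d → Fin 3) (k : Fin d) (x s : Fin 3) :
    cnt (Function.update α k x) s = ecnt α k s + if x = s then 1 else 0 := by
  rw [cnt, ecnt]
  have huniv : (Finset.univ : Finset (Fin d)) = insert k (Finset.univ.erase k) :=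
    (Finset.insert_erase (Finset.mem_univ k)).symm
  have hfe : ((Finset.univ.erase k).filter (fun t => Function.update α k x t = s))
      = ((Finset.univ.erase k).filter (fun t => α t = s)) := by
    apply Finset.filter_congr
    intro t ht
    rw [Function.update_of_ne (Finset.ne_of_mem_erase ht)]
  rw [huniv, Finset.filter_insert, Function.update_self,
    Finset.erase_insert (Finset.notMem_erase k _)]
  split_ifs with hx
  · rw [Finset.card_insert_of_notMem
      (fun hmem => (Finset.mem_erase.mp (Finset.mem_filter.mp hmem).1).1 rfl), hfe]
  · rw [hfe, Nat.add_zero]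

lemma cnt_split {d : ℕ} (α : Fin d → Fin 3) (k : Fin d) (s : Fin 3) :
    cnt α s = ecnt α k s + if α k = s then 1 else 0 := by
  have := cnt_update α k (α k) s
  rwa [Function.update_eq_self] at this

lemma ecnt_total {d : ℕ} (α : Fin d → Fin 3) (k : Fin d) :
    ecnt α k 0 + ecnt α k 1 + ecnt α k 2 + 1 = d := by
  simp only [ecnt, Finset.card_filter, ← Finset.sum_add_distrib]
  have h1 : ∀ x : Fin 3,
      ((if x = 0 then 1 else 0) + (if x = 1 then 1 else 0)) + (if x = 2 then 1 else 0) = 1 := by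
    decide
  rw [Finset.sum_congr rfl (fun t _ => h1 (α t)), Finset.sum_const, smul_eq_mul, mul_one,
    Finset.card_erase_of_mem (Finset.mem_univ k), Finset.card_univ, Fintype.card_fin]
  have := k.pos
  omega

lemma cnt_total {d : ℕ} (α : Fin d → Fin 3) :
    cnt α 0 + cnt α 1 + cnt α 2 = d := by
  simp only [cnt, Finset.card_filter, ← Finset.sum_add_distrib]
  have h1 : ∀ x : Fin 3,
      ((if x = 0 then 1 else 0) + (if x = 1 then 1 else 0)) + (if x = 2 then 1 else 0) = 1 := by
    decide
  rw [Finset.sum_congr rfl (fun t _ => h1 (α t)), Finset.sum_const, smul_eq_mul, mul_one,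
    Finset.card_univ, Fintype.card_fin]

set_option maxHeartbeats 2000000 in
lemma Faux_sum (d n0 n1 n2 : ℕ) (hd : 2 ≤ d) (hde : Even d) (h : n0 + n1 + n2 + 1 = d) :
    Faux d (n0+1) n1 n2 + Faux d n0 (n1+1) n2 + Faux d n0 n1 (n2+1) = 1 := by
  unfold Faux
  simp only [Nat.even_iff] at *
  split_ifs
  all_goals (first | (exfalso; first | assumption | omega) | norm_num)

lemma constr1_rowsum {d : ℕ} (hd : 2 ≤ d) (hde : Even d) (k : Fin d) (α : Fin d → Fin 3) :
    ∑ x : Fin 3, constr1 d (Function.update α k x) = 1 := by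
  have h := ecnt_total α k
  rw [Fin.sum_univ_three]
  simp only [constr1_eq_F, cnt_update]
  norm_num
  exact Faux_sum d _ _ _ hd hde h

set_option maxHeartbeats 2000000 in
lemma Faux_zero_iff (d a b c : ℕ) (hd : 2 ≤ d) (hde : Even d) (h : a + b + c = d) :
    Faux d a b c = 0 ↔
      ((a = 0 ∧ Even b ∧ b ≠ 0 ∧ b ≠ d) ∨ (b = 0 ∧ ¬ Even a) ∨ (c = 0 ∧ ¬ Even a)) := by
  unfold Faux
  simp only [Nat.even_iff] at *
  split_ifs
  all_goals (first | (exfalso; first | assumption | omega) | (norm_num; omega) | norm_num)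

lemma cnt_zero_iff {d : ℕ} (α : Fin d → Fin 3) (s : Fin 3) :
    cnt α s = 0 ↔ ∀ t, α t ≠ s := by
  simp [cnt, Finset.card_eq_zero, Finset.filter_eq_empty_iff]

lemma cnt_eq_d_iff {d : ℕ} (α : Fin d → Fin 3) (s : Fin 3) :
    cnt α s = d ↔ ∀ t, α t = s := by
  constructor
  · intro h t
    have huniv : (Finset.univ.filter (fun t => α t = s)) = Finset.univ := by
      apply Finset.eq_univ_of_card
      rw [Fintype.card_fin]; exact h
    have := Finset.mem_filter.mp (huniv ▸ Finset.mem_univ t)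
    exact this.2
  · intro h
    rw [cnt, Finset.filter_true_of_mem (fun t _ => h t), Finset.card_univ, Fintype.card_fin]

lemma card_cnt_zero (d : ℕ) (w : Fin 3) :
    (Finset.univ.filter (fun α : Fin d → Fin 3 => cnt α w = 0)).card = 2 ^ d := by
  have h : (Finset.univ.filter (fun α : Fin d → Fin 3 => cnt α w = 0))
      = Fintype.piFinset (fun _ : Fin d => ({w}ᶜ : Finset (Fin 3))) := by
    ext α
    simp [cnt_zero_iff, Fintype.mem_piFinset]
  rw [h, Fintype.card_piFinset]
  have hc : ({w}ᶜ : Finset (Fin 3)).card = 2 := by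
    rw [Finset.card_compl, Finset.card_singleton]; rfl
  simp [hc]

lemma fin3_third_s19 : ∀ w u v x : Fin 3, w ≠ u → u ≠ v → w ≠ v → x ≠ w → x = u ∨ x = v := by decide

lemma card_cnt_zero_even (d : ℕ) (hd : 1 ≤ d) (w u v : Fin 3)
    (hwu : w ≠ u) (huv : u ≠ v) (hwv : w ≠ v) :
    (Finset.univ.filter (fun α : Fin d → Fin 3 => cnt α w = 0 ∧ Even (cnt α u))).card
      = 2 ^ (d-1) := by
  classical
  set k : Fin d := ⟨0, by omega⟩ with hk
  set E := Finset.univ.filter (fun α : Fin d → Fin 3 => cnt α w = 0 ∧ Even (cnt α u)) with hE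
  set O := Finset.univ.filter (fun α : Fin d → Fin 3 => cnt α w = 0 ∧ ¬ Even (cnt α u)) with hO
  have hsplit : E.card + O.card = 2 ^ d := by
    rw [← card_cnt_zero d w, hE, hO, ← Finset.filter_filter, ← Finset.filter_filter]
    exact Finset.card_filter_add_card_filter_not _
  set g : (Fin d → Fin 3) → (Fin d → Fin 3) :=
    fun α => Function.update α k (if α k = u then v else u) with hg
  have hgw : ∀ α : Fin d → Fin 3, cnt α w = 0 → cnt (g α) w = 0 := by
    intro α hα
    have h1 : ecnt α k w ≤ cnt α w := by
      rw [cnt_split α k w]; omega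
    have h2 : (if α k = u then v else u) ≠ w := by
      split_ifs
      exacts [Ne.symm hwv, Ne.symm hwu]
    rw [hg, cnt_update]
    simp only [if_neg h2]
    omega
  have hgpar : ∀ α : Fin d → Fin 3, cnt α w = 0 →
      (Even (cnt (g α) u) ↔ ¬ Even (cnt α u)) := by
    intro α hα
    have hsp := cnt_split α k u
    rw [hg, cnt_update]
    by_cases hu : α k = u
    · rw [if_pos hu, if_neg (Ne.symm huv), hsp, if_pos hu]
      simp [Nat.even_add_one]
    · rw [if_neg hu, if_pos rfl, hsp, if_neg hu]
      simp [Nat.even_add_one]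
  have hgg : ∀ α : Fin d → Fin 3, cnt α w = 0 → g (g α) = α := by
    intro α hα
    have hknw : α k ≠ w := (cnt_zero_iff α w).mp hα k
    rcases fin3_third_s19 w u v (α k) hwu huv hwv hknw with hu | hv
    · simp only [hg]
      rw [if_pos hu, Function.update_self, if_neg (Ne.symm huv), Function.update_idem,
        ← hu, Function.update_eq_self]
    · have hu : α k ≠ u := by rw [hv]; exact Ne.symm huv
      simp only [hg]
      rw [if_neg hu, Function.update_self, if_pos rfl, Function.update_idem,
        ← hv, Function.update_eq_self]
  have hcard : E.card = O.card := by
    refine Finset.card_bij' (fun α _ => g α) (fun α _ => g α) ?_ ?_ ?_ ?_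
    · intro α hα
      rw [hE, Finset.mem_filter] at hα
      rw [hO, Finset.mem_filter]
      exact ⟨Finset.mem_univ _, hgw α hα.2.1, by rw [hgpar α hα.2.1]; simp [hα.2.2]⟩
    · intro α hα
      rw [hO, Finset.mem_filter] at hα
      rw [hE, Finset.mem_filter]
      refine ⟨Finset.mem_univ _, hgw α hα.2.1, ?_⟩
      rw [hgpar α hα.2.1]
      simp [hα.2.2]
    · intro α hα
      rw [hE, Finset.mem_filter] at hα
      exact hgg α hα.2.1
    · intro α hα
      rw [hO, Finset.mem_filter] at hα
      exact hgg α hα.2.1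
  have hpow : 2 ^ d = 2 ^ (d - 1) * 2 := by
    rw [← pow_succ]; congr 1; omega
  omega

lemma card_cnt_zero_odd (d : ℕ) (hd : 1 ≤ d) (w u v : Fin 3)
    (hwu : w ≠ u) (huv : u ≠ v) (hwv : w ≠ v) :
    (Finset.univ.filter (fun α : Fin d → Fin 3 => cnt α w = 0 ∧ ¬ Even (cnt α u))).card
      = 2 ^ (d-1) := by
  classical
  have h1 := card_cnt_zero_even d hd w u v hwu huv hwv
  have h2 : (Finset.univ.filter (fun α : Fin d → Fin 3 => cnt α w = 0 ∧ Even (cnt α u))).card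
      + (Finset.univ.filter (fun α : Fin d → Fin 3 => cnt α w = 0 ∧ ¬ Even (cnt α u))).card
      = 2 ^ d := by
    rw [← card_cnt_zero d w, ← Finset.filter_filter, ← Finset.filter_filter]
    exact Finset.card_filter_add_card_filter_not _
  have hpow : 2 ^ d = 2 ^ (d - 1) * 2 := by
    rw [← pow_succ]; congr 1; omega
  omega

lemma fin3_two : ∀ x : Fin 3, x ≠ 0 → x ≠ 1 → x = 2 := by decide

theorem constr1_polystochastic_even {d : ℕ} (hd : 2 ≤ d) (hdeven : Even d) :
    isPolystochastic d 3 (constr1 d) ∧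
      (msupport (constr1 d)).ncard = 3 ^ d - 3 * 2 ^ (d - 1) + 2 := by
  classical
  constructor
  · exact ⟨fun α => constr1_nonneg α, fun k α => constr1_rowsum hd hdeven k α⟩
  -- counting part
  have hz : ∀ α : Fin d → Fin 3, constr1 d α = 0 ↔
      ((cnt α 0 = 0 ∧ Even (cnt α 1) ∧ cnt α 1 ≠ 0 ∧ cnt α 1 ≠ d)
        ∨ (cnt α 1 = 0 ∧ ¬ Even (cnt α 0)) ∨ (cnt α 2 = 0 ∧ ¬ Even (cnt α 0))) := by
    intro α
    rw [constr1_eq_F]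
    exact Faux_zero_iff d _ _ _ hd hdeven (cnt_total α)
  set P : (Fin d → Fin 3) → Prop := fun α =>
      ((cnt α 0 = 0 ∧ Even (cnt α 1) ∧ cnt α 1 ≠ 0 ∧ cnt α 1 ≠ d)
        ∨ (cnt α 1 = 0 ∧ ¬ Even (cnt α 0)) ∨ (cnt α 2 = 0 ∧ ¬ Even (cnt α 0))) with hP
  have hsupp : msupport (constr1 d)
      = ↑(Finset.univ.filter (fun α : Fin d → Fin 3 => ¬ P α)) := by
    ext α
    simp only [msupport, Set.mem_setOf_eq, Finset.coe_filter, Finset.mem_univ, true_and,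
      Set.mem_setOf_eq]
    rw [hP]
    constructor
    · intro h hcontra; exact h ((hz α).mpr hcontra)
    · intro h hcontra; exact h ((hz α).mp hcontra)
  rw [hsupp, Set.ncard_coe_finset]
  have hcardsplit : (Finset.univ.filter (fun α : Fin d → Fin 3 => P α)).card
      + (Finset.univ.filter (fun α : Fin d → Fin 3 => ¬ P α)).card
      = 3 ^ d := by
    rw [Finset.card_filter_add_card_filter_not, Finset.card_univ]
    simp [Fintype.card_fun]
  -- the three pieces of the zero set
  set Z1 := Finset.univ.filter (fun α : Fin d → Fin 3 =>
    cnt α 0 = 0 ∧ Even (cnt α 1) ∧ cnt α 1 ≠ 0 ∧ cnt α 1 ≠ d) with hZ1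
  set Z2 := Finset.univ.filter (fun α : Fin d → Fin 3 =>
    cnt α 1 = 0 ∧ ¬ Even (cnt α 0)) with hZ2
  set Z3 := Finset.univ.filter (fun α : Fin d → Fin 3 =>
    cnt α 2 = 0 ∧ ¬ Even (cnt α 0)) with hZ3
  have hPunion : Finset.univ.filter (fun α : Fin d → Fin 3 => P α) = Z1 ∪ (Z2 ∪ Z3) := by
    rw [hZ1, hZ2, hZ3, ← Finset.filter_or, ← Finset.filter_or]
  have hdisj23 : Disjoint Z2 Z3 := by
    rw [Finset.disjoint_left]
    intro a h2 h3
    rw [hZ2, Finset.mem_filter] at h2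
    rw [hZ3, Finset.mem_filter] at h3
    have htot := cnt_total a
    have h0d : cnt a 0 = d := by omega
    rw [h0d] at h2; exact h2.2.2 hdeven
  have hdisj123 : Disjoint Z1 (Z2 ∪ Z3) := by
    rw [Finset.disjoint_left]
    intro a h1 h23
    rw [hZ1, Finset.mem_filter] at h1
    rcases Finset.mem_union.mp h23 with h2 | h3
    · rw [hZ2, Finset.mem_filter] at h2
      exact h2.2.2 (h1.2.1 ▸ Even.zero)
    · rw [hZ3, Finset.mem_filter] at h3
      exact h3.2.2 (h1.2.1 ▸ Even.zero)
  -- cardinality of Z1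
  set κ1 : Fin d → Fin 3 := fun _ => 1 with hκ1
  set κ2 : Fin d → Fin 3 := fun _ => 2 with hκ2
  have hE1 : Finset.univ.filter (fun α : Fin d → Fin 3 => cnt α 0 = 0 ∧ Even (cnt α 1))
      = Z1 ∪ {κ1, κ2} := by
    ext α
    rw [hZ1]
    simp only [Finset.mem_filter, Finset.mem_union, Finset.mem_insert, Finset.mem_singleton,
      Finset.mem_univ, true_and]
    constructor
    · rintro ⟨h0, h1⟩
      by_cases hbd : cnt α 1 = d
      · right; left
        funext t
        exact (cnt_eq_d_iff α 1).mp hbd t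
      by_cases hb0 : cnt α 1 = 0
      · right; right
        funext t
        exact fin3_two (α t) ((cnt_zero_iff α 0).mp h0 t) ((cnt_zero_iff α 1).mp hb0 t)
      · exact Or.inl ⟨h0, h1, hb0, hbd⟩
    · rintro (⟨h0, h1, _, _⟩ | rfl | rfl)
      · exact ⟨h0, h1⟩
      · refine ⟨(cnt_zero_iff _ 0).mpr (fun t => show (1 : Fin 3) ≠ 0 by decide), ?_⟩
        have hh : cnt κ1 1 = d := (cnt_eq_d_iff _ 1).mpr (fun t => rfl)
        rw [hh]; exact hdeven
      · refine ⟨(cnt_zero_iff _ 0).mpr (fun t => show (2 : Fin 3) ≠ 0 by decide), ?_⟩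
        have hh : cnt κ2 1 = 0 := (cnt_zero_iff _ 1).mpr (fun t => show (2 : Fin 3) ≠ 1 by decide)
        rw [hh]; exact Even.zero
  have hdisjZ1 : Disjoint Z1 ({κ1, κ2} : Finset (Fin d → Fin 3)) := by
    rw [Finset.disjoint_right]
    intro a ha hmem
    rw [hZ1, Finset.mem_filter] at hmem
    rcases Finset.mem_insert.mp ha with rfl | ha'
    · exact hmem.2.2.2.2 ((cnt_eq_d_iff _ 1).mpr fun t => rfl)
    · rw [Finset.mem_singleton] at ha'
      subst ha'
      exact hmem.2.2.2.1 ((cnt_zero_iff _ 1).mpr fun t => show (2 : Fin 3) ≠ 1 by decide)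
  have hκne : κ1 ≠ κ2 := by
    intro h
    have h2 : (1 : Fin 3) = (2 : Fin 3) := congrFun h ⟨0, by omega⟩
    exact absurd h2 (by decide)
  have hcardE1 : Z1.card + 2 = 2 ^ (d - 1) := by
    have h1 := card_cnt_zero_even d (by omega) 0 1 2 (by decide) (by decide) (by decide)
    rw [hE1, Finset.card_union_of_disjoint hdisjZ1, Finset.card_pair hκne] at h1
    exact h1
  have hcardZ2 : Z2.card = 2 ^ (d - 1) :=
    card_cnt_zero_odd d (by omega) 1 0 2 (by decide) (by decide) (by decide)
  have hcardZ3 : Z3.card = 2 ^ (d - 1) :=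
    card_cnt_zero_odd d (by omega) 2 0 1 (by decide) (by decide) (by decide)
  have hcardP : (Finset.univ.filter (fun α : Fin d → Fin 3 => P α)).card
      = Z1.card + (Z2.card + Z3.card) := by
    rw [hPunion, Finset.card_union_of_disjoint hdisj123, Finset.card_union_of_disjoint hdisj23]
  have hp2 : 2 ≤ 2 ^ (d - 1) := by
    calc 2 = 2 ^ 1 := rfl
    _ ≤ 2 ^ (d - 1) := Nat.pow_le_pow_right (by norm_num) (by omega)
  have hp3 : 3 * 2 ^ (d - 1) ≤ 3 ^ d := by
    have h1 : 2 ^ (d - 1) ≤ 3 ^ (d - 1) := Nat.pow_le_pow_left (by norm_num) _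
    have h2 : 3 ^ d = 3 * 3 ^ (d - 1) := by
      conv_lhs => rw [show d = (d - 1) + 1 by omega]
      rw [pow_succ]
      ring
    omega
  omega
end
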